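/- arXiv:2301.02020 — 3 statements merged into one kernel-verified Lean document; each statement's English description precedes it below -/
import Mathlib

section
/- Let n be a prime number and let S be a finite set of positive integers that contains no three-term arithmetic progression, all of whose elements are congruent to 1 modulo 4, and whose maximum element is at most n/8. Let G be the graph on vertex set Z/nZ obtained from the complete graph K_n by removing, for every s ∈ S and every i ∈ Z/nZ, the edges {i, i+s} and {i, i+2s} (arithmetic modulo n). Then the 3-token-jumping configuration graph R_3(G) is the disjoint union of exactly |S| induced cycles of length n: for each s ∈ S, the sets {i, i+s, i+2s} for i ∈ Z/nZ form one n-cycle, every independent set of size 3 of G is of this form, and there are no edges of R_3(G) between cycles coming from distinct elements of S. -/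
/-!
Common definitions: independent sets of a given size, the token-jumping configuration
graph `R_k(G)`, diameters of connected components, and the extremal function `D n k`.
-/

open Finset SimpleGraph

attribute [local instance] Classical.propDecidable

/-- `s` is an independent set of the graph `G`: its vertices are pairwise non-adjacent. -/
def IndepFinset {V : Type*} (G : SimpleGraph V) (s : Finset V) : Prop :=
  ∀ u ∈ s, ∀ v ∈ s, u ≠ v → ¬ G.Adj u v

/-- The `k`-token-jumping configuration graph `R_k(G)`: its vertices are the independent sets
of size `k` of `G`, two of them being adjacent iff their intersection has `k - 1` elements. -/
def ConfigGraph {V : Type*} [DecidableEq V] (G : SimpleGraph V) (k : ℕ) :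
    SimpleGraph {s : Finset V // s.card = k ∧ IndepFinset G s} where
  Adj I J := I ≠ J ∧ ((I : Finset V) ∩ (J : Finset V)).card = k - 1
  symm := ⟨fun I J h => ⟨h.1.symm, by rw [Finset.inter_comm]; exact h.2⟩⟩
  loopless := ⟨fun I h => h.1 rfl⟩

/-- The diameter of the connected component of `H` containing the vertex `u`. -/
noncomputable def compDiam {α : Type*} [Fintype α] (H : SimpleGraph α) (u : α) : ℕ :=
  (Finset.univ : Finset (α × α)).sup fun p =>
    if H.Reachable u p.1 ∧ H.Reachable u p.2 then H.dist p.1 p.2 else 0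

/-- The diameter of the connected component `c` of `H`. -/
noncomputable def componentDiam {α : Type*} [Fintype α] (H : SimpleGraph α)
    (c : H.ConnectedComponent) : ℕ :=
  (Finset.univ : Finset (α × α)).sup fun p =>
    if H.connectedComponentMk p.1 = c ∧ H.connectedComponentMk p.2 = c then H.dist p.1 p.2 else 0

/-- The maximum diameter of a connected component of `H`. -/
noncomputable def maxCompDiam {α : Type*} [Fintype α] (H : SimpleGraph α) : ℕ :=
  (Finset.univ : Finset α).sup fun u => compDiam H u

/-- `D n k`: the maximum, over all graphs `G` on `n` vertices, of the diameter of a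
connected component of the configuration graph `R_k(G)`. -/
noncomputable def D (n k : ℕ) : ℕ :=
  (Finset.univ : Finset (SimpleGraph (Fin n))).sup fun G => maxCompDiam (ConfigGraph G k)

/-- The triple `{i, i+s, i+2s}` in `ZMod n`. -/
def tripleSet (n : ℕ) (s : ℕ) (i : ZMod n) : Finset (ZMod n) :=
  {i, i + (s : ZMod n), i + 2 * (s : ZMod n)}

/-- The graph on `ZMod n` obtained from the complete graph by removing, for every `s ∈ S`
and every `i`, the edges `{i, i+s}` and `{i, i+2s}`. -/
def cliqueMinusAP (n : ℕ) (S : Finset ℕ) : SimpleGraph (ZMod n) where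
  Adj i j := i ≠ j ∧ ∀ s ∈ S,
    j - i ≠ (s : ZMod n) ∧ j - i ≠ 2 * (s : ZMod n) ∧
    i - j ≠ (s : ZMod n) ∧ i - j ≠ 2 * (s : ZMod n)
  symm := by
    constructor
    rintro i j ⟨hne, h⟩
    exact ⟨hne.symm, fun s hs =>
      ⟨(h s hs).2.2.1, (h s hs).2.2.2, (h s hs).1, (h s hs).2.1⟩⟩
  loopless := by constructor; rintro i ⟨hne, -⟩; exact hne rfl

/-! ### Auxiliary lemmas -/

lemma zmod_int_eq {n : ℕ} {e₁ e₂ : ℤ} (h : ((e₁ : ℤ) : ZMod n) = (e₂ : ℤ))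
    (hb : (e₁ - e₂).natAbs < n) : e₁ = e₂ := by
  have h0 : ((e₁ - e₂ : ℤ) : ZMod n) = 0 := by push_cast; rw [h]; ring
  rw [ZMod.intCast_zmod_eq_zero_iff_dvd] at h0
  have h2 : n ∣ (e₁ - e₂).natAbs := Int.natAbs_dvd_natAbs.mpr (by simpa using h0)
  rcases Nat.eq_zero_or_pos (e₁ - e₂).natAbs with h3 | h3
  · omega
  · exact absurd (Nat.le_of_dvd h3 h2) (by omega)

lemma natCast_ne_zero_zmod {n m : ℕ} (h1 : 0 < m) (h2 : m < n) : (m : ZMod n) ≠ 0 := by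
  rw [Ne, ZMod.natCast_eq_zero_iff]
  intro h
  exact absurd (Nat.le_of_dvd h1 h) (by omega)

section
variable {n : ℕ} {S : Finset ℕ} {s : ℕ}

lemma s_ne_zero (hs1 : 1 ≤ s) (hsn : 8 * s ≤ n) : (s : ZMod n) ≠ 0 :=
  natCast_ne_zero_zmod hs1 (by omega)

lemma two_s_ne_zero (hs1 : 1 ≤ s) (hsn : 8 * s ≤ n) : 2 * (s : ZMod n) ≠ 0 := by
  have h := natCast_ne_zero_zmod (n := n) (m := 2 * s) (by omega) (by omega)
  intro hc; apply h; push_cast; linear_combination hc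

lemma three_s_ne_zero (hs1 : 1 ≤ s) (hsn : 8 * s ≤ n) : 3 * (s : ZMod n) ≠ 0 := by
  have h := natCast_ne_zero_zmod (n := n) (m := 3 * s) (by omega) (by omega)
  intro hc; apply h; push_cast; linear_combination hc

lemma mem_tripleSet_iff {i x : ZMod n} :
    x ∈ tripleSet n s i ↔ x = i ∨ x = i + (s : ZMod n) ∨ x = i + 2 * (s : ZMod n) := by
  simp [tripleSet]

lemma mem_tripleSet_iff' {i x : ZMod n} :
    x ∈ tripleSet n s i ↔ ∃ p : ℕ, p ≤ 2 ∧ x = i + (p : ZMod n) * (s : ZMod n) := by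
  rw [mem_tripleSet_iff]
  constructor
  · rintro (rfl | rfl | rfl)
    exacts [⟨0, by norm_num, by push_cast; ring⟩, ⟨1, by norm_num, by push_cast; ring⟩,
      ⟨2, by norm_num, by push_cast; ring⟩]
  · rintro ⟨p, hp, rfl⟩
    interval_cases p
    · left; push_cast; ring
    · right; left; push_cast; ring
    · right; right; push_cast; ring

lemma tripleSet_card (hs1 : 1 ≤ s) (hsn : 8 * s ≤ n) {i : ZMod n} :
    (tripleSet n s i).card = 3 := by
  classical
  have h1 := s_ne_zero (n := n) hs1 hsn
  have h2 := two_s_ne_zero (n := n) hs1 hsn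
  rw [tripleSet, card_insert_of_notMem, card_insert_of_notMem, card_singleton]
  · simp only [mem_singleton]
    intro h
    exact h1 (by linear_combination -h)
  · simp only [mem_insert, mem_singleton]
    rintro (h | h)
    · exact h1 (by linear_combination -h)
    · exact h2 (by linear_combination -h)

lemma tripleSet_indep (hs : s ∈ S) {i : ZMod n} :
    IndepFinset (cliqueMinusAP n S) (tripleSet n s i) := by
  have key : ∀ u v : ZMod n, v - u = (s : ZMod n) ∨ v - u = 2 * (s : ZMod n) ∨
      u - v = (s : ZMod n) ∨ u - v = 2 * (s : ZMod n) → ¬ (cliqueMinusAP n S).Adj u v := by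
    rintro u v h ⟨hne, hall⟩
    obtain ⟨c1, c2, c3, c4⟩ := hall s hs
    tauto
  intro u hu v hv hne
  rw [mem_tripleSet_iff] at hu hv
  apply key
  rcases hu with rfl | rfl | rfl <;> rcases hv with rfl | rfl | rfl <;>
    first
      | exact absurd rfl hne
      | (left; ring1)
      | (right; left; ring1)
      | (right; right; left; ring1)
      | (right; right; right; ring1)

lemma tripleSet_inter_card (hs1 : 1 ≤ s) (hsn : 8 * s ≤ n) {i : ZMod n} :
    (tripleSet n s i ∩ tripleSet n s (i + (s : ZMod n))).card = 2 := by
  classical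
  have h1 := s_ne_zero (n := n) hs1 hsn
  have h2 := two_s_ne_zero (n := n) hs1 hsn
  have h3 := three_s_ne_zero (n := n) hs1 hsn
  have key : tripleSet n s i ∩ tripleSet n s (i + (s : ZMod n))
      = {i + (s : ZMod n), i + 2 * (s : ZMod n)} := by
    ext x
    simp only [mem_inter, mem_tripleSet_iff, mem_insert, mem_singleton]
    constructor
    · rintro ⟨h | h | h, g | g | g⟩
      · exact absurd (show (s : ZMod n) = 0 by linear_combination h - g) h1
      · exact absurd (show 2 * (s : ZMod n) = 0 by linear_combination h - g) h2
      · exact absurd (show 3 * (s : ZMod n) = 0 by linear_combination h - g) h3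
      all_goals first
        | exact Or.inl h
        | exact Or.inr h
    · rintro (rfl | rfl)
      · exact ⟨Or.inr (Or.inl rfl), Or.inl rfl⟩
      · exact ⟨Or.inr (Or.inr rfl), Or.inr (Or.inl (by ring1))⟩
  rw [key, card_insert_of_notMem, card_singleton]
  simp only [mem_singleton]
  intro h
  exact h1 (by linear_combination -h)

lemma nonadj_extract {a b : ZMod n} (hne : a ≠ b)
    (h : ¬ (cliqueMinusAP n S).Adj a b) :
    ∃ s ∈ S, ∃ e : ℤ, b - a = (e : ZMod n) ∧
      (e = s ∨ e = 2 * s ∨ e = -(s : ℤ) ∨ e = -(2 * s)) := by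
  simp only [cliqueMinusAP, SimpleGraph.Adj] at h
  push_neg at h
  obtain ⟨t, ht, h⟩ := h hne
  by_cases h1 : b - a = (t : ZMod n)
  · exact ⟨t, ht, (t : ℤ), by push_cast; exact h1, Or.inl rfl⟩
  by_cases h2 : b - a = 2 * (t : ZMod n)
  · exact ⟨t, ht, 2 * (t : ℤ), by push_cast; exact h2, Or.inr (Or.inl rfl)⟩
  by_cases h3 : a - b = (t : ZMod n)
  · refine ⟨t, ht, -(t : ℤ), ?_, Or.inr (Or.inr (Or.inl rfl))⟩
    push_cast
    linear_combination -h3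
  · have h4 := h h1 h2 h3
    refine ⟨t, ht, -(2 * (t : ℤ)), ?_, Or.inr (Or.inr (Or.inr rfl))⟩
    push_cast
    linear_combination -h4
end

lemma key_comb {S : Finset ℕ} (hAP : ThreeAPFree (S : Set ℕ))
    {s₁ s₂ s₃ : ℕ} (h₁ : s₁ ∈ S) (h₂ : s₂ ∈ S) (h₃ : s₃ ∈ S)
    (hm₁ : s₁ % 4 = 1) (hm₂ : s₂ % 4 = 1) (hm₃ : s₃ % 4 = 1)
    {e₁ e₂ e₃ : ℤ}
    (he₁ : e₁ = s₁ ∨ e₁ = 2 * s₁ ∨ e₁ = -(s₁ : ℤ) ∨ e₁ = -(2 * s₁))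
    (he₂ : e₂ = s₂ ∨ e₂ = 2 * s₂ ∨ e₂ = -(s₂ : ℤ) ∨ e₂ = -(2 * s₂))
    (he₃ : e₃ = s₃ ∨ e₃ = 2 * s₃ ∨ e₃ = -(s₃ : ℤ) ∨ e₃ = -(2 * s₃))
    (hsum : e₁ + e₂ = e₃) :
    s₁ = s₂ ∧ s₁ = s₃ ∧
      ((e₁ = s₁ ∧ e₂ = s₁) ∨ (e₁ = -(s₁ : ℤ) ∧ e₂ = -(s₁ : ℤ)) ∨
       (e₁ = 2 * s₁ ∧ e₂ = -(s₁ : ℤ)) ∨ (e₁ = -(2 * s₁) ∧ e₂ = s₁) ∨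
       (e₁ = s₁ ∧ e₂ = -(2 * s₁)) ∨ (e₁ = -(s₁ : ℤ) ∧ e₂ = 2 * s₁)) := by
  have h1 : s₁ ∈ (S : Set ℕ) := by exact_mod_cast h₁
  have h2 : s₂ ∈ (S : Set ℕ) := by exact_mod_cast h₂
  have h3 : s₃ ∈ (S : Set ℕ) := by exact_mod_cast h₃
  rcases he₁ with he₁ | he₁ | he₁ | he₁ <;>
    rcases he₂ with he₂ | he₂ | he₂ | he₂ <;>
      rcases he₃ with he₃ | he₃ | he₃ | he₃ <;>
        first
          | omega
          | (have := hAP h1 h3 h2 (show s₁ + s₂ = s₃ + s₃ by omega); omega)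
          | (have := hAP h2 h1 h3 (show s₂ + s₃ = s₁ + s₁ by omega); omega)
          | (have := hAP h3 h2 h1 (show s₃ + s₁ = s₂ + s₂ by omega); omega)

set_option maxHeartbeats 1600000 in
/-- Let `n` be prime and `S` a 3-AP-free set of positive integers, all `≡ 1 (mod 4)`, with
maximum element at most `n/8`. Then `R_3(cliqueMinusAP n S)` is the disjoint union of
exactly `|S|` induced cycles of length `n`: (1) for each `s ∈ S` and `i`, the triple
`{i, i+s, i+2s}` is an independent set of size `3`; (2) these triples are pairwise distinct
(over all `s ∈ S` and `i`); (3) every independent set of size `3` is such a triple; and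
(4) two triples intersect in exactly `2` vertices (i.e. are adjacent in `R_3`) iff they come
from the same `s ∈ S` and are consecutive, so the triples of each `s` form one `n`-cycle and
there are no edges between cycles coming from distinct elements of `S`. -/
theorem clique_minus_AP_config (n : ℕ) (hn : n.Prime) (S : Finset ℕ)
    (hAP : ThreeAPFree (S : Set ℕ)) (hmod : ∀ s ∈ S, s % 4 = 1)
    (hmax : ∀ s ∈ S, 8 * s ≤ n) :
    (∀ s ∈ S, ∀ i : ZMod n, (tripleSet n s i).card = 3 ∧
        IndepFinset (cliqueMinusAP n S) (tripleSet n s i)) ∧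
    (∀ s ∈ S, ∀ s' ∈ S, ∀ i j : ZMod n,
        tripleSet n s i = tripleSet n s' j → s = s' ∧ i = j) ∧
    (∀ T : Finset (ZMod n), T.card = 3 → IndepFinset (cliqueMinusAP n S) T →
        ∃ s ∈ S, ∃ i : ZMod n, T = tripleSet n s i) ∧
    (∀ s ∈ S, ∀ s' ∈ S, ∀ i j : ZMod n,
        (tripleSet n s i ∩ tripleSet n s' j).card = 2 ↔
          s = s' ∧ (j = i + (s : ZMod n) ∨ i = j + (s' : ZMod n))) := by
  have hone : ∀ s ∈ S, 1 ≤ s := fun s hs => by have := hmod s hs; omega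
  refine ⟨fun s hs i => ⟨tripleSet_card (hone s hs) (hmax s hs), tripleSet_indep hs⟩,
    ?_, ?_, ?_⟩
  · -- Part 2: injectivity
    intro s hs s' hs' i j heq
    have hs1 := hone s hs
    have hs'1 := hone s' hs'
    have h8 := hmax s hs
    have h8' := hmax s' hs'
    obtain ⟨p, hp2, hip⟩ := mem_tripleSet_iff'.mp
      (heq ▸ mem_tripleSet_iff'.mpr ⟨0, by norm_num, by push_cast; ring⟩ :
        i ∈ tripleSet n s' j)
    obtain ⟨q, hq2, hjq⟩ := mem_tripleSet_iff'.mp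
      (heq.symm ▸ mem_tripleSet_iff'.mpr ⟨0, by norm_num, by push_cast; ring⟩ :
        j ∈ tripleSet n s i)
    have hz : ((p * s' + q * s : ℕ) : ZMod n) = 0 := by
      push_cast
      linear_combination -hip - hjq
    have hdvd := (ZMod.natCast_eq_zero_iff _ _).mp hz
    have hb1 : p * s' ≤ 2 * s' := Nat.mul_le_mul_right _ hp2
    have hb2 : q * s ≤ 2 * s := Nat.mul_le_mul_right _ hq2
    have hpq : p * s' + q * s = 0 := by
      rcases Nat.eq_zero_or_pos (p * s' + q * s) with h | h
      · exact h
      · exact absurd (Nat.le_of_dvd h hdvd) (by omega)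
    have hq0 : q = 0 := by
      rcases Nat.mul_eq_zero.mp (Nat.eq_zero_of_add_eq_zero_left hpq) with h | h
      · exact h
      · omega
    have hij : i = j := by
      rw [hq0] at hjq
      push_cast at hjq
      linear_combination -hjq
    subst hij
    have hmem : i + (s : ZMod n) ∈ tripleSet n s' i :=
      heq ▸ mem_tripleSet_iff.mpr (Or.inr (Or.inl rfl))
    rw [mem_tripleSet_iff] at hmem
    rcases hmem with h | h | h
    · exact absurd (show (s : ZMod n) = 0 by linear_combination h)
        (s_ne_zero hs1 h8)
    · have : (s : ℤ) = (s' : ℤ) := by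
        apply zmod_int_eq (n := n)
        · push_cast; linear_combination h
        · omega
      exact ⟨by omega, rfl⟩
    · have : (s : ℤ) = 2 * (s' : ℤ) := by
        apply zmod_int_eq (n := n)
        · push_cast; linear_combination h
        · omega
      have hm := hmod s hs
      have hm' := hmod s' hs'
      omega
  · -- Part 3: every independent triple is a tripleSet
    intro T hT hI
    obtain ⟨a, b, c, hab, hac, hbc, rfl⟩ := Finset.card_eq_three.mp hT
    have ha : a ∈ ({a, b, c} : Finset (ZMod n)) := by simp
    have hb : b ∈ ({a, b, c} : Finset (ZMod n)) := by simp
    have hc : c ∈ ({a, b, c} : Finset (ZMod n)) := by simp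
    obtain ⟨s₁, hs₁, e₁, he₁eq, he₁⟩ := nonadj_extract hab (hI a ha b hb hab)
    obtain ⟨s₂, hs₂, e₂, he₂eq, he₂⟩ := nonadj_extract hbc (hI b hb c hc hbc)
    obtain ⟨s₃, hs₃, e₃, he₃eq, he₃⟩ := nonadj_extract hac (hI a ha c hc hac)
    have h8₁ := hmax s₁ hs₁
    have h8₂ := hmax s₂ hs₂
    have h8₃ := hmax s₃ hs₃
    have hs₁1 := hone s₁ hs₁
    have hsum : e₁ + e₂ = e₃ := by
      apply zmod_int_eq (n := n)
      · push_cast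
        linear_combination -he₁eq - he₂eq + he₃eq
      · omega
    obtain ⟨h12, h13, hcase⟩ := key_comb hAP hs₁ hs₂ hs₃ (hmod s₁ hs₁) (hmod s₂ hs₂)
      (hmod s₃ hs₃) he₁ he₂ he₃ hsum
    refine ⟨s₁, hs₁, ?_⟩
    rcases hcase with ⟨hv₁, hv₂⟩ | ⟨hv₁, hv₂⟩ | ⟨hv₁, hv₂⟩ | ⟨hv₁, hv₂⟩ | ⟨hv₁, hv₂⟩ |
      ⟨hv₁, hv₂⟩ <;>
      rw [hv₁] at he₁eq <;> rw [hv₂] at he₂eq <;> push_cast at he₁eq he₂eq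
    · -- b = a + s, c = a + 2s : start a, order (a, b, c)
      refine ⟨a, ?_⟩
      have g1 : a + (s₁ : ZMod n) = b := by linear_combination -he₁eq
      have g2 : a + 2 * (s₁ : ZMod n) = c := by linear_combination -he₁eq - he₂eq
      ext x
      rw [mem_tripleSet_iff, g1, g2]
      simp only [mem_insert, mem_singleton]
      try constructor <;> rintro (h | h | h) <;> simp [h]
    · -- b = a - s, c = a - 2s : start c, order (c, b, a)
      refine ⟨c, ?_⟩
      have g1 : c + (s₁ : ZMod n) = b := by linear_combination he₂eq
      have g2 : c + 2 * (s₁ : ZMod n) = a := by linear_combination he₁eq + he₂eq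
      ext x
      rw [mem_tripleSet_iff, g1, g2]
      simp only [mem_insert, mem_singleton]
      try constructor <;> rintro (h | h | h) <;> simp [h]
    · -- b = a + 2s, c = a + s : start a, order (a, c, b)
      refine ⟨a, ?_⟩
      have g1 : a + (s₁ : ZMod n) = c := by linear_combination -he₁eq - he₂eq
      have g2 : a + 2 * (s₁ : ZMod n) = b := by linear_combination -he₁eq
      ext x
      rw [mem_tripleSet_iff, g1, g2]
      simp only [mem_insert, mem_singleton]
      try constructor <;> rintro (h | h | h) <;> simp [h]
    · -- b = a - 2s, c = a - s : start b, order (b, c, a)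
      refine ⟨b, ?_⟩
      have g1 : b + (s₁ : ZMod n) = c := by linear_combination -he₂eq
      have g2 : b + 2 * (s₁ : ZMod n) = a := by linear_combination he₁eq
      ext x
      rw [mem_tripleSet_iff, g1, g2]
      simp only [mem_insert, mem_singleton]
      try constructor <;> rintro (h | h | h) <;> simp [h]
    · -- b = a + s, c = a - s : start c, order (c, a, b)
      refine ⟨c, ?_⟩
      have g1 : c + (s₁ : ZMod n) = a := by linear_combination he₁eq + he₂eq
      have g2 : c + 2 * (s₁ : ZMod n) = b := by linear_combination he₂eq
      ext x
      rw [mem_tripleSet_iff, g1, g2]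
      simp only [mem_insert, mem_singleton]
      try constructor <;> rintro (h | h | h) <;> simp [h]
    · -- b = a - s, c = a + s : start b, order (b, a, c)
      refine ⟨b, ?_⟩
      have g1 : b + (s₁ : ZMod n) = a := by linear_combination he₁eq
      have g2 : b + 2 * (s₁ : ZMod n) = c := by linear_combination -he₂eq
      ext x
      rw [mem_tripleSet_iff, g1, g2]
      simp only [mem_insert, mem_singleton]
      try constructor <;> rintro (h | h | h) <;> simp [h]
  · -- Part 4: adjacency structure
    intro s hs s' hs' i j
    have hs1 := hone s hs
    have hs'1 := hone s' hs'
    have h8 := hmax s hs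
    have h8' := hmax s' hs'
    constructor
    · intro hcard
      have h2 : 1 < (tripleSet n s i ∩ tripleSet n s' j).card := by omega
      obtain ⟨x, hx, y, hy, hxy⟩ := Finset.one_lt_card.mp h2
      rw [mem_inter] at hx hy
      obtain ⟨p₁, hp₁2, hxp⟩ := mem_tripleSet_iff'.mp hx.1
      obtain ⟨q₁, hq₁2, hxq⟩ := mem_tripleSet_iff'.mp hx.2
      obtain ⟨p₂, hp₂2, hyp⟩ := mem_tripleSet_iff'.mp hy.1
      obtain ⟨q₂, hq₂2, hyq⟩ := mem_tripleSet_iff'.mp hy.2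
      have hpne : p₁ ≠ p₂ := by
        rintro rfl
        exact hxy (by rw [hxp, hyp])
      have hint : (p₁ : ℤ) * s + q₂ * s' = (p₂ : ℤ) * s + q₁ * s' := by
        apply zmod_int_eq (n := n)
        · push_cast
          linear_combination -hxp + hxq + hyp - hyq
        · have b1 : (p₁ : ℤ) * s ≤ 2 * s := by
            have : (p₁ : ℤ) ≤ 2 := by exact_mod_cast hp₁2
            nlinarith [Int.natCast_nonneg s]
          have b2 : (p₂ : ℤ) * s ≤ 2 * s := by
            have : (p₂ : ℤ) ≤ 2 := by exact_mod_cast hp₂2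
            nlinarith [Int.natCast_nonneg s]
          have b3 : (q₁ : ℤ) * s' ≤ 2 * s' := by
            have : (q₁ : ℤ) ≤ 2 := by exact_mod_cast hq₁2
            nlinarith [Int.natCast_nonneg s']
          have b4 : (q₂ : ℤ) * s' ≤ 2 * s' := by
            have : (q₂ : ℤ) ≤ 2 := by exact_mod_cast hq₂2
            nlinarith [Int.natCast_nonneg s']
          have c1 : 0 ≤ (p₁ : ℤ) * s := by positivity
          have c2 : 0 ≤ (p₂ : ℤ) * s := by positivity
          have c3 : 0 ≤ (q₁ : ℤ) * s' := by positivity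
          have c4 : 0 ≤ (q₂ : ℤ) * s' := by positivity
          omega
      have hm := hmod s hs
      have hm' := hmod s' hs'
      have hkey : s = s' ∧ (p₁ = q₁ + 1 ∨ q₁ = p₁ + 1 ∨ p₁ = q₁) := by
        interval_cases p₁ <;> interval_cases p₂ <;> interval_cases q₁ <;>
          interval_cases q₂ <;> omega
      obtain ⟨rfl, htri⟩ := hkey
      refine ⟨rfl, ?_⟩
      rcases htri with h | h | h
      · left
        rw [h] at hxp
        rw [hxp] at hxq
        push_cast at hxq
        linear_combination -hxq
      · right
        rw [h] at hxq
        rw [hxp] at hxq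
        push_cast at hxq
        linear_combination hxq
      · exfalso
        have hij : i = j := by
          rw [h] at hxp
          rw [hxp] at hxq
          linear_combination hxq
        rw [hij, Finset.inter_self, tripleSet_card hs1 h8] at hcard
        exact absurd hcard (by norm_num)
    · rintro ⟨rfl, h | h⟩
      · rw [h]
        exact tripleSet_inter_card hs1 h8
      · rw [h, Finset.inter_comm]
        exact tripleSet_inter_card hs1 h8
end

section
/- For every integer k ≥ 2, D(n,k) = Ω_k(n^{⌊k/2⌋}); that is, there exist constants c_k > 0 and N_k such that for all n ≥ N_k, D(n,k) ≥ c_k · n^{⌊k/2⌋}. -/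
/-!
Common definitions: independent sets of a given size, the token-jumping configuration
graph `R_k(G)`, diameters of connected components, and the extremal function `D n k`.
-/

open Finset SimpleGraph

attribute [local instance] Classical.propDecidable

namespace TJL

lemma compDiam_ge {α : Type*} [Fintype α] (H : SimpleGraph α) (u a b : α)
    (ha : H.Reachable u a) (hb : H.Reachable u b) : H.dist a b ≤ compDiam H u := by
  unfold compDiam
  calc H.dist a b
      = if H.Reachable u a ∧ H.Reachable u b then H.dist a b else 0 :=
        (if_pos ⟨ha, hb⟩).symm
    _ ≤ _ := Finset.le_sup (f := fun p =>
        if H.Reachable u p.1 ∧ H.Reachable u p.2 then H.dist p.1 p.2 else 0)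
      (Finset.mem_univ (a, b))

lemma maxCompDiam_ge {α : Type*} [Fintype α] (H : SimpleGraph α) (u : α) :
    compDiam H u ≤ maxCompDiam H :=
  Finset.le_sup (Finset.mem_univ u)

lemma D_ge (n k : ℕ) (G0 : SimpleGraph (Fin n)) :
    maxCompDiam (ConfigGraph G0 k) ≤ D n k :=
  Finset.le_sup (f := fun Gg : SimpleGraph (Fin n) => maxCompDiam (ConfigGraph Gg k))
    (Finset.mem_univ G0)

end TJL
namespace TJL

/-! ### The construction: `m` tracks of width `3B+2`, an optional frozen vertex, padding. -/

def W (B : ℕ) : ℕ := 3 * B + 2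

def vtx (B t r : ℕ) : ℕ := t * W B + r

lemma W_pos (B : ℕ) : 0 < W B := by unfold W; omega

lemma vtx_lt {B t r m : ℕ} (ht : t < m) (hr : r < W B) : vtx B t r < m * W B := by
  have h3 : (t + 1) * W B ≤ m * W B := Nat.mul_le_mul_right _ ht
  have : (t + 1) * W B = t * W B + W B := by ring
  unfold vtx; omega

lemma vtx_div {B t r : ℕ} (hr : r < W B) : vtx B t r / W B = t := by
  unfold vtx
  rw [Nat.add_comm, Nat.add_mul_div_right _ _ (W_pos B), Nat.div_eq_of_lt hr]; omega

lemma vtx_mod {B t r : ℕ} (hr : r < W B) : vtx B t r % W B = r := by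
  unfold vtx
  rw [Nat.add_comm, Nat.add_mul_mod_self_right, Nat.mod_eq_of_lt hr]

lemma vtx_inj {B t r t' r' : ℕ} (hr : r < W B) (hr' : r' < W B)
    (h : vtx B t r = vtx B t' r') : t = t' ∧ r = r' := by
  constructor
  · rw [← vtx_div (B := B) (t := t) hr, h, vtx_div hr']
  · rw [← vtx_mod (B := B) (t := t) hr, h, vtx_mod hr']

lemma vtx_decomp {B m v : ℕ} (hv : v < m * W B) :
    ∃ t r, t < m ∧ r < W B ∧ v = vtx B t r := by
  refine ⟨v / W B, v % W B, ?_, Nat.mod_lt _ (W_pos B), ?_⟩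
  · exact Nat.div_lt_of_lt_mul (by rwa [Nat.mul_comm] at hv)
  · unfold vtx; rw [Nat.mul_comm]; exact (Nat.div_add_mod v (W B)).symm

/-- cross adjacency: `u` is a constraint (transit) vertex of a higher track,
`v` a vertex of a lower track outside the dictated parking area. -/
def cross (B u v : ℕ) : Prop :=
  v / W B < u / W B ∧ u % W B % 3 = 2 ∧
    (if (u % W B / 3) % 2 = 0 then v % W B < 3 * B else 2 ≤ v % W B)

def rel (m B par u v : ℕ) : Prop :=
  (m * W B + par ≤ u) ∨
  (u < m * W B ∧ v < m * W B ∧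
    ((u / W B = v / W B ∧ u % W B ≠ v % W B + 1 ∧ v % W B ≠ u % W B + 1) ∨ cross B u v))

def G (m B par n : ℕ) : SimpleGraph (Fin n) :=
  SimpleGraph.fromRel (fun u v => rel m B par u.val v.val)

lemma G_adj {m B par n : ℕ} {u v : Fin n} :
    (G m B par n).Adj u v ↔ u ≠ v ∧ (rel m B par u.val v.val ∨ rel m B par v.val u.val) :=
  SimpleGraph.fromRel_adj _ u v

/-! ### Configurations -/

def park (B i : ℕ) : ℕ := if i % 2 = 0 then 3 * B else 0

lemma park_cases (B i : ℕ) : park B i = 0 ∨ park B i = 3 * B := by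
  unfold park; split <;> simp

def Qok (m B : ℕ) (q : ℕ → ℕ) : Prop := ∀ t, t < m → q t ≤ 3 * B

def ValidQ (m B : ℕ) (q : ℕ → ℕ) : Prop :=
  Qok m B q ∧ ∀ t, t < m → q t % 3 ≠ 0 → ∀ s, s < t → q s = park B (q t / 3)

def encL (m B par : ℕ) (q : ℕ → ℕ) : Finset ℕ :=
  ((Finset.range m).biUnion fun t => {vtx B t (q t), vtx B t (q t + 1)}) ∪
    (Finset.range par).image fun _ => m * W B

lemma mem_encL {m B par v : ℕ} {q : ℕ → ℕ} :
    v ∈ encL m B par q ↔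
      (∃ t, t < m ∧ (v = vtx B t (q t) ∨ v = vtx B t (q t + 1))) ∨ (0 < par ∧ v = m * W B) := by
  simp only [encL, Finset.mem_union, Finset.mem_biUnion, Finset.mem_range, Finset.mem_image,
    Finset.mem_insert, Finset.mem_singleton]
  constructor
  · rintro (⟨t, ht, h⟩ | ⟨a, ha, h⟩)
    · exact Or.inl ⟨t, ht, h⟩
    · exact Or.inr ⟨by omega, h.symm⟩
  · rintro (⟨t, ht, h⟩ | ⟨h1, h2⟩)
    · exact Or.inl ⟨t, ht, h⟩
    · exact Or.inr ⟨0, by omega, h2.symm⟩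

lemma encL_congr {m B par : ℕ} {q q' : ℕ → ℕ} (h : ∀ t, t < m → q t = q' t) :
    encL m B par q = encL m B par q' := by
  unfold encL
  congr 1
  apply Finset.biUnion_congr rfl
  intro t ht
  rw [h t (Finset.mem_range.mp ht)]

lemma encL_lt {m B par n : ℕ} {q : ℕ → ℕ} (hq : Qok m B q) (hn : m * W B + par ≤ n) :
    ∀ v ∈ encL m B par q, v < n := by
  intro v hv
  rcases mem_encL.mp hv with ⟨t, ht, h⟩ | ⟨h1, h2⟩
  · have hb : q t ≤ 3 * B := hq t ht
    have h1 : q t < W B := by unfold W; omega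
    have h2 : q t + 1 < W B := by unfold W; omega
    rcases h with h | h <;> subst h
    · exact lt_of_lt_of_le (vtx_lt ht h1) (by omega)
    · exact lt_of_lt_of_le (vtx_lt ht h2) (by omega)
  · omega

lemma qlt {m B : ℕ} {q : ℕ → ℕ} (hq : Qok m B q) {t : ℕ} (ht : t < m) :
    q t < W B ∧ q t + 1 < W B := by
  have := hq t ht; unfold W; omega

lemma encL_card {m B par : ℕ} {q : ℕ → ℕ} (hq : Qok m B q) (hpar : par ≤ 1) :
    (encL m B par q).card = 2 * m + par := by
  unfold encL
  have hdisj : Disjoint ((Finset.range m).biUnion fun t => {vtx B t (q t), vtx B t (q t + 1)})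
      ((Finset.range par).image fun _ => m * W B) := by
    rw [Finset.disjoint_right]
    intro a ha hb
    simp only [Finset.mem_image, Finset.mem_range] at ha
    obtain ⟨x, hx, rfl⟩ := ha
    simp only [Finset.mem_biUnion, Finset.mem_range, Finset.mem_insert,
      Finset.mem_singleton] at hb
    obtain ⟨t, ht, hcase⟩ := hb
    rcases hcase with hcase | hcase <;>
      exact absurd hcase.symm (Nat.ne_of_lt (vtx_lt ht (by have := (qlt hq ht); omega)))
  rw [Finset.card_union_of_disjoint hdisj]
  have hpw : ∀ x ∈ Finset.range m, ∀ y ∈ Finset.range m, x ≠ y →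
      Disjoint ({vtx B x (q x), vtx B x (q x + 1)} : Finset ℕ)
        {vtx B y (q y), vtx B y (q y + 1)} := by
    intro x hx y hy hxy
    rw [Finset.mem_range] at hx hy
    rw [Finset.disjoint_left]
    intro a ha hb
    simp only [Finset.mem_insert, Finset.mem_singleton] at ha hb
    have hx1 := (qlt hq hx).1; have hx2 := (qlt hq hx).2
    have hy1 := (qlt hq hy).1; have hy2 := (qlt hq hy).2
    rcases ha with rfl | rfl <;> rcases hb with hb | hb <;>
      [ exact hxy (vtx_inj hx1 hy1 hb).1; exact hxy (vtx_inj hx1 hy2 hb).1;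
        exact hxy (vtx_inj hx2 hy1 hb).1; exact hxy (vtx_inj hx2 hy2 hb).1 ]
  rw [Finset.card_biUnion hpw]
  have hcards : ∀ t ∈ Finset.range m,
      ({vtx B t (q t), vtx B t (q t + 1)} : Finset ℕ).card = 2 := by
    intro t ht
    rw [Finset.mem_range] at ht
    refine Finset.card_pair fun hcon => ?_
    have := (vtx_inj (qlt hq ht).1 (qlt hq ht).2 hcon).2
    omega
  rw [Finset.sum_congr rfl hcards, Finset.sum_const, Finset.card_range, smul_eq_mul]
  have hi : ((Finset.range par).image fun _ => m * W B).card = par := by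
    interval_cases par
    · simp
    · simp
  omega

lemma mem_encL_track {m B par : ℕ} {q : ℕ → ℕ} (hq : Qok m B q) {t r : ℕ}
    (ht : t < m) (hr : r < W B) (h : vtx B t r ∈ encL m B par q) :
    r = q t ∨ r = q t + 1 := by
  rcases mem_encL.mp h with ⟨t1, ht1, hh⟩ | ⟨_, hh⟩
  · rcases hh with hh | hh
    · rcases vtx_inj hr (qlt hq ht1).1 hh with ⟨rfl, h2⟩; exact Or.inl h2
    · rcases vtx_inj hr (qlt hq ht1).2 hh with ⟨rfl, h2⟩; exact Or.inr h2
  · exact absurd hh (Nat.ne_of_lt (vtx_lt ht hr))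

lemma encL_inj {m B par : ℕ} {q q' : ℕ → ℕ} (hq : Qok m B q) (hq' : Qok m B q')
    (h : encL m B par q = encL m B par q') : ∀ t, t < m → q t = q' t := by
  intro t ht
  have h1 : vtx B t (q t) ∈ encL m B par q' := by
    rw [← h]; exact mem_encL.mpr (Or.inl ⟨t, ht, Or.inl rfl⟩)
  have h2 : vtx B t (q' t) ∈ encL m B par q := by
    rw [h]; exact mem_encL.mpr (Or.inl ⟨t, ht, Or.inl rfl⟩)
  have e1 := mem_encL_track hq' ht (qlt hq ht).1 h1
  have e2 := mem_encL_track hq ht (qlt hq' ht).1 h2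
  omega

end TJL
namespace TJL

/-! ### Lifting to `Fin n` -/

def genF (n : ℕ) (s : Finset ℕ) : Finset (Fin n) :=
  Finset.filter (fun v : Fin n => v.val ∈ s) Finset.univ

lemma mem_genF {n : ℕ} {s : Finset ℕ} {v : Fin n} : v ∈ genF n s ↔ v.val ∈ s := by
  simp [genF]

lemma genF_image {n : ℕ} {s : Finset ℕ} (h : ∀ v ∈ s, v < n) :
    (genF n s).image Fin.val = s := by
  ext a
  simp only [Finset.mem_image]
  constructor
  · rintro ⟨v, hv, rfl⟩; exact mem_genF.mp hv
  · intro ha; exact ⟨⟨a, h a ha⟩, mem_genF.mpr ha, rfl⟩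

lemma genF_card {n : ℕ} {s : Finset ℕ} (h : ∀ v ∈ s, v < n) :
    (genF n s).card = s.card := by
  have h2 := Finset.card_image_of_injective (genF n s) Fin.val_injective
  rw [genF_image h] at h2
  omega

lemma genF_inj {n : ℕ} {s s' : Finset ℕ} (h : ∀ v ∈ s, v < n) (h' : ∀ v ∈ s', v < n)
    (heq : genF n s = genF n s') : s = s' := by
  rw [← genF_image h, ← genF_image h', heq]

lemma genF_inter {n : ℕ} {s s' : Finset ℕ} :
    genF n (s ∩ s') = genF n s ∩ genF n s' := by
  ext v
  simp [mem_genF, Finset.mem_inter]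

def encF (m B par n : ℕ) (q : ℕ → ℕ) : Finset (Fin n) := genF n (encL m B par q)

lemma mem_encL_elim {m B par a : ℕ} {q : ℕ → ℕ} (ha : a ∈ encL m B par q) :
    (∃ t d, t < m ∧ d ≤ 1 ∧ a = vtx B t (q t + d)) ∨ (0 < par ∧ a = m * W B) := by
  rcases mem_encL.mp ha with ⟨t, ht, hh⟩ | hh
  · rcases hh with hh | hh
    · exact Or.inl ⟨t, 0, ht, by omega, by simpa using hh⟩
    · exact Or.inl ⟨t, 1, ht, by omega, hh⟩
  · exact Or.inr hh

lemma not_rel_of_mem {m B par : ℕ} {q : ℕ → ℕ} (hv : ValidQ m B q) {a b : ℕ}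
    (ha : a ∈ encL m B par q) (hb : b ∈ encL m B par q) (hne : a ≠ b) :
    ¬ rel m B par a b := by
  intro hrel
  rcases mem_encL_elim ha with ⟨t, da, ht, hda, rfl⟩ | ⟨hp, rfl⟩
  · have hqt := hv.1 t ht
    have hwa : q t + da < W B := by unfold W; omega
    have haM : vtx B t (q t + da) < m * W B := vtx_lt ht hwa
    rcases hrel with hrel | ⟨_, hbM, hor⟩
    · omega
    · rcases mem_encL_elim hb with ⟨s, db, hs, hdb, rfl⟩ | ⟨hp, rfl⟩
      · have hqs := hv.1 s hs
        have hwb : q s + db < W B := by unfold W; omega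
        rcases hor with ⟨hts, hne1, hne2⟩ | hcr
        · rw [vtx_div hwa, vtx_div hwb] at hts
          rw [vtx_mod hwa, vtx_mod hwb] at hne1 hne2
          subst hts
          have : da ≠ db := fun hc => hne (by rw [hc])
          omega
        · unfold cross at hcr
          rw [vtx_div hwa, vtx_div hwb, vtx_mod hwa, vtx_mod hwb] at hcr
          obtain ⟨hlt, h3, hwin⟩ := hcr
          have h30 : q t % 3 ≠ 0 := by omega
          have hpark := hv.2 t ht h30 s hlt
          have hdiv : (q t + da) / 3 = q t / 3 := by omega
          rw [hdiv] at hwin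
          unfold park at hpark
          split at hwin <;> split at hpark <;> omega
      · omega
  · rcases hrel with hrel | hrel
    · omega
    · omega

lemma indep_encF {m B par n : ℕ} {q : ℕ → ℕ} (hv : ValidQ m B q) :
    IndepFinset (G m B par n) (encF m B par n q) := by
  intro u hu v hvv hne hadj
  have hne' : u.val ≠ v.val := fun h => hne (Fin.val_injective h)
  rcases (G_adj.mp hadj).2 with hrel | hrel
  · exact not_rel_of_mem hv (mem_genF.mp hu) (mem_genF.mp hvv) hne' hrel
  · exact not_rel_of_mem hv (mem_genF.mp hvv) (mem_genF.mp hu) hne'.symm hrel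

lemma not_adj_window {m B par n : ℕ} {q : ℕ → ℕ} (hq : Qok m B q)
    (hn : m * W B + par ≤ n)
    (hind : IndepFinset (G m B par n) (encF m B par n q))
    {t s r e : ℕ} (ht : t < m) (hst : s < t) (hr : r = q t ∨ r = q t + 1)
    (hr3 : r % 3 = 2) (he : e ≤ 1) :
    ¬ (if (r / 3) % 2 = 0 then q s + e < 3 * B else 2 ≤ q s + e) := by
  have hqt := hq t ht
  have hqs := hq s (by omega)
  have hwr : r < W B := by unfold W; omega
  have hws : q s + e < W B := by unfold W; omega
  have hu : vtx B t r < n := lt_of_lt_of_le (vtx_lt ht hwr) (by omega)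
  have hv : vtx B s (q s + e) < n := lt_of_lt_of_le (vtx_lt (by omega : s < m) hws) (by omega)
  set uF : Fin n := ⟨vtx B t r, hu⟩
  set vF : Fin n := ⟨vtx B s (q s + e), hv⟩
  have huE : uF ∈ encF m B par n q := by
    apply mem_genF.mpr; apply mem_encL.mpr
    refine Or.inl ⟨t, ht, ?_⟩
    rcases hr with hr | hr <;> [left; right] <;> simp [uF, hr]
  have hvE : vF ∈ encF m B par n q := by
    apply mem_genF.mpr; apply mem_encL.mpr
    refine Or.inl ⟨s, by omega, ?_⟩
    interval_cases e
    · left; simp [vF]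
    · right; simp [vF]
  have hneq : uF ≠ vF := by
    intro hcon
    have := (vtx_inj hwr hws (congrArg Fin.val hcon)).1
    omega
  have hnadj := hind uF huE vF hvE hneq
  intro hwin
  apply hnadj
  apply G_adj.mpr
  refine ⟨hneq, Or.inl ?_⟩
  apply Or.inr
  refine ⟨lt_of_lt_of_le (vtx_lt ht hwr) (by omega), vtx_lt (by omega : s < m) hws, ?_⟩
  apply Or.inr
  unfold cross
  rw [vtx_div hwr, vtx_div hws, vtx_mod hwr, vtx_mod hws]
  exact ⟨hst, hr3, hwin⟩

lemma valid_of_indep {m B par n : ℕ} {q : ℕ → ℕ} (hq : Qok m B q)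
    (hn : m * W B + par ≤ n)
    (hind : IndepFinset (G m B par n) (encF m B par n q)) : ValidQ m B q := by
  refine ⟨hq, ?_⟩
  intro t ht h3 s hst
  have hr : ∃ r, (r = q t ∨ r = q t + 1) ∧ r % 3 = 2 := by
    by_cases h2 : q t % 3 = 2
    · exact ⟨q t, Or.inl rfl, h2⟩
    · exact ⟨q t + 1, Or.inr rfl, by omega⟩
  obtain ⟨r, hrF, hr3⟩ := hr
  have h0 := not_adj_window hq hn hind ht hst hrF hr3 (by omega : (0:ℕ) ≤ 1)
  have h1 := not_adj_window hq hn hind ht hst hrF hr3 (by omega : (1:ℕ) ≤ 1)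
  have hdiv : r / 3 = q t / 3 := by omega
  rw [hdiv] at h0 h1
  have hqs := hq s (by omega)
  unfold park
  split at h0 <;> [rw [if_pos (by assumption)]; rw [if_neg (by assumption)]]
  · split at h1 <;> omega
  · split at h1 <;> omega

end TJL
namespace TJL

/-! ### The potential function -/

def Mx (B : ℕ) : ℕ → ℕ
  | 0 => 0
  | j+1 => (B+1) * Mx B j + 3*B

def Aval (B Mt qv : ℕ) : ℤ :=
  ((qv / 3 : ℕ) : ℤ) * ((Mt : ℤ) + 3) +
    (if qv % 3 = 0 then (if (qv / 3) % 2 = 0 then 0 else (Mt : ℤ))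
     else (Mt : ℤ) + ((qv % 3 : ℕ) : ℤ))

def eps (qv : ℕ) : ℤ := if qv % 3 = 0 then (if (qv / 3) % 2 = 0 then 1 else -1) else 0

def Phi (B : ℕ) : ℕ → (ℕ → ℕ) → ℤ
  | 0, _ => 0
  | (j+1), q => Aval B (Mx B j) (q j) + eps (q j) * Phi B j q

lemma Aval_eval0 {B Mt a : ℕ} (h : a % 3 = 0) :
    Aval B Mt a = ((a / 3 : ℕ) : ℤ) * ((Mt : ℤ) + 3) +
      (if (a / 3) % 2 = 0 then 0 else (Mt : ℤ)) := by
  unfold Aval; rw [if_pos h]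

lemma Aval_evalT {B Mt a : ℕ} (h : a % 3 ≠ 0) :
    Aval B Mt a = ((a / 3 : ℕ) : ℤ) * ((Mt : ℤ) + 3) + (Mt : ℤ) + ((a % 3 : ℕ) : ℤ) := by
  unfold Aval; rw [if_neg h]; ring

lemma eps_eval0 {a : ℕ} (h : a % 3 = 0) :
    eps a = if (a / 3) % 2 = 0 then 1 else -1 := by
  unfold eps; rw [if_pos h]

lemma eps_evalT {a : ℕ} (h : a % 3 ≠ 0) : eps a = 0 := by
  unfold eps; rw [if_neg h]

lemma Phi_congr {B : ℕ} : ∀ {j : ℕ} {q q' : ℕ → ℕ},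
    (∀ t, t < j → q t = q' t) → Phi B j q = Phi B j q'
  | 0, _, _, _ => rfl
  | (j+1), q, q', h => by
      show Aval B (Mx B j) (q j) + eps (q j) * Phi B j q
          = Aval B (Mx B j) (q' j) + eps (q' j) * Phi B j q'
      rw [h j (by omega), Phi_congr (fun t ht => h t (by omega))]

lemma Phi_park {B : ℕ} (hBe : B % 2 = 0) {i : ℕ} :
    ∀ {j : ℕ} {q : ℕ → ℕ}, (∀ t, t < j → q t = park B i) →
      Phi B j q = if i % 2 = 0 then ((Mx B j : ℕ) : ℤ) else 0 := by
  intro j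
  induction j with
  | zero => intro q h; show (0 : ℤ) = _; unfold Mx; split <;> simp
  | succ j ih =>
    intro q h
    have hqj := h j (by omega)
    show Aval B (Mx B j) (q j) + eps (q j) * Phi B j q = _
    rw [ih (fun t ht => h t (by omega)), hqj]
    unfold park
    by_cases hi : i % 2 = 0
    · rw [if_pos hi, if_pos hi, if_pos hi]
      rw [Aval_eval0 (by omega), eps_eval0 (by omega)]
      rw [show (3 * B) / 3 = B by omega, if_pos hBe, if_pos hBe]
      rw [show Mx B (j+1) = (B+1) * Mx B j + 3*B from rfl]
      push_cast
      ring
    · rw [if_neg hi, if_neg hi, if_neg hi]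
      rw [Aval_eval0 (by omega), eps_eval0 (by omega)]
      rw [show (0:ℕ) / 3 = 0 by omega, show (0:ℕ)%2 = 0 by omega]
      simp

lemma phi_step_aux {m B : ℕ} (hBe : B % 2 = 0) {q q' : ℕ → ℕ} {t : ℕ}
    (hq : ValidQ m B q) (hq' : ValidQ m B q') (ht : t < m)
    (ha : ∀ s, s < m → s ≠ t → q' s = q s) (hs : q' t = q t + 1) :
    ∀ j, t < j → j ≤ m → Phi B j q' - Phi B j q = 1 ∨ Phi B j q' - Phi B j q = -1 := by
  intro j
  induction j with
  | zero => omega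
  | succ j ih =>
    intro htj hjm
    by_cases hcase : j = t
    · subst hcase
      left
      have hP : Phi B j q' = Phi B j q :=
        Phi_congr (fun s hs' => (ha s (by omega) (by omega)).symm) |>.symm
      show Aval B (Mx B j) (q' j) + eps (q' j) * Phi B j q'
          - (Aval B (Mx B j) (q j) + eps (q j) * Phi B j q) = 1
      rw [hP, hs]
      set a := q j with haq
      set M := Mx B j with hM
      have ha3 : a % 3 = 0 ∨ a % 3 = 1 ∨ a % 3 = 2 := by omega
      rcases ha3 with h3 | h3 | h3
      · -- rest → transit
        have hpk : ∀ s, s < j → q s = park B (a / 3) := by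
          intro s hs'
          have h2 := hq'.2 j (by omega) (by rw [hs]; omega) s hs'
          rw [hs, show (a+1)/3 = a/3 by omega] at h2
          rw [← ha s (by omega) (by omega)]
          exact h2
        have hPv := Phi_park hBe hpk
        rw [Aval_evalT (a := a + 1) (by omega), Aval_eval0 h3,
          eps_evalT (a := a+1) (by omega), eps_eval0 h3,
          show (a+1)/3 = a/3 by omega, show (a+1)%3 = 1 by omega, hPv, ← hM]
        by_cases hi : (a/3) % 2 = 0
        · rw [if_pos hi, if_pos hi, if_pos hi]; push_cast; ring
        · rw [if_neg hi, if_neg hi, if_neg hi]; push_cast; ring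
      · rw [Aval_evalT (a := a + 1) (by omega), Aval_evalT (a := a) (by omega),
          eps_evalT (a := a+1) (by omega), eps_evalT (a := a) (by omega),
          show (a+1)/3 = a/3 by omega, show (a+1)%3 = 2 by omega, h3]
        push_cast; ring
      · -- transit → rest
        have hpk : ∀ s, s < j → q s = park B (a / 3) := by
          intro s hs'
          exact hq.2 j (by omega) (by omega) s hs'
        have hPv := Phi_park hBe hpk
        rw [Aval_eval0 (a := a + 1) (by omega), Aval_evalT (a := a) (by omega),
          eps_eval0 (a := a+1) (by omega), eps_evalT (a := a) (by omega),
          show (a+1)/3 = a/3 + 1 by omega, h3, hPv, ← hM]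
        by_cases hi : (a/3) % 2 = 0
        · rw [if_neg (by omega : ¬ (a/3+1) % 2 = 0), if_pos hi,
            if_neg (by omega : ¬ (a/3+1) % 2 = 0)]
          push_cast; ring
        · rw [if_pos (by omega : (a/3+1) % 2 = 0), if_neg hi,
            if_pos (by omega : (a/3+1) % 2 = 0)]
          push_cast; ring
    · have htj' : t < j := by omega
      have hrec := ih htj' (by omega)
      have hqq : q' j = q j := ha j (by omega) hcase
      show Aval B (Mx B j) (q' j) + eps (q' j) * Phi B j q'
          - (Aval B (Mx B j) (q j) + eps (q j) * Phi B j q) = 1 ∨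
        Aval B (Mx B j) (q' j) + eps (q' j) * Phi B j q'
          - (Aval B (Mx B j) (q j) + eps (q j) * Phi B j q) = -1
      rw [hqq]
      by_cases h3 : q j % 3 = 0
      · rw [eps_eval0 h3]
        by_cases h2 : (q j / 3) % 2 = 0
        · rw [if_pos h2]
          rcases hrec with h | h
          · left; linarith
          · right; linarith
        · rw [if_neg h2]
          rcases hrec with h | h
          · right; linarith
          · left; linarith
      · exfalso
        have h1 := hq.2 j (by omega) h3 t htj'
        have h2' := hq'.2 j (by omega) (by rwa [hqq]) t htj'
        rw [hqq] at h2'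
        have := park_cases B (q j / 3)
        omega

lemma phi_step {m B : ℕ} (hm : 1 ≤ m) (hBe : B % 2 = 0) {q q' : ℕ → ℕ} {t : ℕ}
    (hq : ValidQ m B q) (hq' : ValidQ m B q') (ht : t < m)
    (ha : ∀ s, s < m → s ≠ t → q' s = q s) (hs : q' t = q t + 1) :
    Phi B m q' - Phi B m q = 1 ∨ Phi B m q' - Phi B m q = -1 :=
  phi_step_aux hBe hq hq' ht ha hs m ht le_rfl

lemma Mx_ge {B : ℕ} : ∀ {j : ℕ}, 1 ≤ j → B ^ j ≤ Mx B j := by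
  intro j
  induction j with
  | zero => omega
  | succ j ih =>
    intro _
    rcases Nat.eq_zero_or_pos j with rfl | hj
    · show B ^ 1 ≤ Mx B 1
      unfold Mx Mx
      nlinarith
    · have h1 := ih hj
      show B ^ (j+1) ≤ (B+1) * Mx B j + 3*B
      have : B ^ (j + 1) = B * B ^ j := by ring
      nlinarith

end TJL
namespace TJL

/-! ### Configuration vertices -/

def cfg (m B par n : ℕ) (q : ℕ → ℕ) (hv : ValidQ m B q) (hpar : par ≤ 1)
    (hn : m * W B + par ≤ n) :
    {s : Finset (Fin n) // s.card = 2*m+par ∧ IndepFinset (G m B par n) s} :=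
  ⟨encF m B par n q,
    by rw [encF, genF_card (encL_lt hv.1 hn), encL_card hv.1 hpar],
    indep_encF hv⟩

lemma cfg_congr {m B par n : ℕ} {q q' : ℕ → ℕ} {hv hv' hpar hn}
    (h : ∀ t, t < m → q t = q' t) :
    cfg m B par n q hv hpar hn = cfg m B par n q' hv' hpar hn := by
  apply Subtype.ext
  show encF m B par n q = encF m B par n q'
  unfold encF
  rw [encL_congr h]

lemma qok_step {m B : ℕ} {q q' : ℕ → ℕ} {t : ℕ} (hq : Qok m B q) (ht : t < m)
    (ha : ∀ s, s < m → s ≠ t → q' s = q s) (hs : q' t = q t + 1) (hb : q t + 1 ≤ 3*B) :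
    Qok m B q' := by
  intro s hsm
  by_cases hst : s = t
  · subst hst; omega
  · rw [ha s hsm hst]; exact hq s hsm

lemma encL_inter_step {m B par : ℕ} {q q' : ℕ → ℕ} {t : ℕ} (hq : Qok m B q) (ht : t < m)
    (ha : ∀ s, s < m → s ≠ t → q' s = q s) (hs : q' t = q t + 1) (hb : q t + 1 ≤ 3*B) :
    encL m B par q ∩ encL m B par q' = (encL m B par q).erase (vtx B t (q t)) := by
  have hq' : Qok m B q' := qok_step hq ht ha hs hb
  ext v
  rw [Finset.mem_inter, Finset.mem_erase]
  constructor
  · rintro ⟨h1, h2⟩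
    refine ⟨?_, h1⟩
    rintro rfl
    have := mem_encL_track hq' ht (qlt hq ht).1 h2
    omega
  · rintro ⟨hne, h1⟩
    refine ⟨h1, ?_⟩
    rcases mem_encL_elim h1 with ⟨s, d, hsm, hd, rfl⟩ | ⟨hp, rfl⟩
    · by_cases hst : s = t
      · subst hst
        have hd1 : d = 1 := by
          rcases Nat.le_one_iff_eq_zero_or_eq_one.mp hd with rfl | rfl
          · exact absurd (by rw [Nat.add_zero]) hne
          · rfl
        subst hd1
        refine mem_encL.mpr (Or.inl ⟨s, hsm, Or.inl ?_⟩)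
        rw [hs]
      · refine mem_encL.mpr (Or.inl ⟨s, hsm, ?_⟩)
        rw [ha s hsm hst]
        rcases Nat.le_one_iff_eq_zero_or_eq_one.mp hd with rfl | rfl
        · left; rw [Nat.add_zero]
        · right; rfl
    · exact mem_encL.mpr (Or.inr ⟨hp, rfl⟩)

lemma vtx_mem_encL {m B par : ℕ} {q : ℕ → ℕ} {t : ℕ} (ht : t < m) :
    vtx B t (q t) ∈ encL m B par q :=
  mem_encL.mpr (Or.inl ⟨t, ht, Or.inl rfl⟩)

lemma step_adj {m B par n : ℕ} {q q' : ℕ → ℕ} {t : ℕ}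
    (hpar : par ≤ 1) (hn : m * W B + par ≤ n)
    (hv : ValidQ m B q) (hv' : ValidQ m B q') (ht : t < m)
    (ha : ∀ s, s < m → s ≠ t → q' s = q s) (hs : q' t = q t + 1) (hb : q t + 1 ≤ 3*B) :
    (ConfigGraph (G m B par n) (2*m+par)).Adj
      (cfg m B par n q hv hpar hn) (cfg m B par n q' hv' hpar hn) := by
  refine And.intro ?_ ?_
  · intro hcon
    have h0 : encF m B par n q = encF m B par n q' := congrArg Subtype.val hcon
    have heq := genF_inj (encL_lt hv.1 hn) (encL_lt hv'.1 hn) h0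
    have := encL_inj hv.1 hv'.1 heq t ht
    omega
  · show ((encF m B par n q : Finset (Fin n)) ∩ encF m B par n q').card = 2*m+par - 1
    unfold encF
    rw [← genF_inter, encL_inter_step hv.1 ht ha hs hb]
    have hsub : ∀ v ∈ (encL m B par q).erase (vtx B t (q t)), v < n := by
      intro v hvv
      exact encL_lt hv.1 hn v (Finset.mem_of_mem_erase hvv)
    rw [genF_card hsub, Finset.card_erase_of_mem (vtx_mem_encL ht), encL_card hv.1 hpar]

end TJL
namespace TJL

/-! ### Classification of neighbors in the configuration graph -/

lemma encL_insert_erase {m B par : ℕ} {q q' : ℕ → ℕ} {t : ℕ}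
    (hq : Qok m B q) (hq' : Qok m B q') (ht : t < m)
    (ha : ∀ s, s < m → s ≠ t → q' s = q s) (hstep : q' t = q t + 1) :
    insert (vtx B t (q t + 2)) ((encL m B par q).erase (vtx B t (q t)))
      = encL m B par q' := by
  ext v
  rw [Finset.mem_insert, Finset.mem_erase]
  constructor
  · rintro (rfl | ⟨hne, hmem⟩)
    · refine mem_encL.mpr (Or.inl ⟨t, ht, Or.inr ?_⟩)
      rw [hstep]
    · rcases mem_encL_elim hmem with ⟨s, d, hsm, hd, rfl⟩ | ⟨hp, rfl⟩
      · by_cases hst : s = t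
        · subst hst
          have hd1 : d = 1 := by
            rcases Nat.le_one_iff_eq_zero_or_eq_one.mp hd with rfl | rfl
            · exact absurd (by rw [Nat.add_zero]) hne
            · rfl
          subst hd1
          refine mem_encL.mpr (Or.inl ⟨s, hsm, Or.inl ?_⟩)
          rw [hstep]
        · refine mem_encL.mpr (Or.inl ⟨s, hsm, ?_⟩)
          rw [ha s hsm hst]
          rcases Nat.le_one_iff_eq_zero_or_eq_one.mp hd with rfl | rfl
          · left; rw [Nat.add_zero]
          · right; rfl
      · exact mem_encL.mpr (Or.inr ⟨hp, rfl⟩)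
  · intro hmem
    rcases mem_encL_elim hmem with ⟨s, d, hsm, hd, rfl⟩ | ⟨hp, rfl⟩
    · by_cases hst : s = t
      · subst hst
        rcases Nat.le_one_iff_eq_zero_or_eq_one.mp hd with rfl | rfl
        · right
          refine ⟨?_, ?_⟩
          · intro hcon
            have hb : q' s + 0 < W B := by have := (qlt hq' hsm).1; omega
            have := (vtx_inj hb (qlt hq hsm).1 hcon).2
            omega
          · refine mem_encL.mpr (Or.inl ⟨s, hsm, Or.inr ?_⟩)
            rw [show q' s + 0 = q s + 1 by omega]
        · left
          rw [show q' s + 1 = q s + 2 by omega]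
      · right
        refine ⟨?_, ?_⟩
        · intro hcon
          have hb : q' s + d < W B := by
            have h1 := (qlt hq hsm).2
            have h2 := ha s hsm hst
            omega
          exact hst (vtx_inj hb (qlt hq ht).1 hcon).1
        · refine mem_encL.mpr (Or.inl ⟨s, hsm, ?_⟩)
          rcases Nat.le_one_iff_eq_zero_or_eq_one.mp hd with rfl | rfl
          · left; rw [ha s hsm hst, Nat.add_zero]
          · right; rw [ha s hsm hst]
    · right
      refine ⟨?_, ?_⟩
      · exact (Nat.ne_of_lt (vtx_lt ht (qlt hq ht).1)).symm
      · exact mem_encL.mpr (Or.inr ⟨hp, rfl⟩)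

lemma encL_insert_erase_down {m B par : ℕ} {q q' : ℕ → ℕ} {t : ℕ}
    (hq : Qok m B q) (hq' : Qok m B q') (ht : t < m)
    (ha : ∀ s, s < m → s ≠ t → q' s = q s) (hstep : q t = q' t + 1) :
    insert (vtx B t (q' t)) ((encL m B par q).erase (vtx B t (q t + 1)))
      = encL m B par q' := by
  ext v
  rw [Finset.mem_insert, Finset.mem_erase]
  constructor
  · rintro (rfl | ⟨hne, hmem⟩)
    · exact mem_encL.mpr (Or.inl ⟨t, ht, Or.inl rfl⟩)
    · rcases mem_encL_elim hmem with ⟨s, d, hsm, hd, rfl⟩ | ⟨hp, rfl⟩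
      · by_cases hst : s = t
        · subst hst
          have hd0 : d = 0 := by
            rcases Nat.le_one_iff_eq_zero_or_eq_one.mp hd with rfl | rfl
            · rfl
            · exact absurd rfl hne
          subst hd0
          refine mem_encL.mpr (Or.inl ⟨s, hsm, Or.inr ?_⟩)
          rw [show q s + 0 = q' s + 1 by omega]
        · refine mem_encL.mpr (Or.inl ⟨s, hsm, ?_⟩)
          rw [ha s hsm hst]
          rcases Nat.le_one_iff_eq_zero_or_eq_one.mp hd with rfl | rfl
          · left; rw [Nat.add_zero]
          · right; rfl
      · exact mem_encL.mpr (Or.inr ⟨hp, rfl⟩)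
  · intro hmem
    rcases mem_encL_elim hmem with ⟨s, d, hsm, hd, rfl⟩ | ⟨hp, rfl⟩
    · by_cases hst : s = t
      · subst hst
        rcases Nat.le_one_iff_eq_zero_or_eq_one.mp hd with rfl | rfl
        · left
          rw [Nat.add_zero]
        · right
          refine ⟨?_, ?_⟩
          · intro hcon
            have hb : q' s + 1 < W B := by have := (qlt hq' hsm).2; omega
            have := (vtx_inj hb (qlt hq hsm).2 hcon).2
            omega
          · refine mem_encL.mpr (Or.inl ⟨s, hsm, Or.inl ?_⟩)
            rw [show q' s + 1 = q s + 0 by omega, Nat.add_zero]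
      · right
        refine ⟨?_, ?_⟩
        · intro hcon
          have hb : q' s + d < W B := by
            have h1 := (qlt hq hsm).2
            have h2 := ha s hsm hst
            omega
          exact hst (vtx_inj hb (qlt hq ht).2 hcon).1
        · refine mem_encL.mpr (Or.inl ⟨s, hsm, ?_⟩)
          rcases Nat.le_one_iff_eq_zero_or_eq_one.mp hd with rfl | rfl
          · left; rw [ha s hsm hst, Nat.add_zero]
          · right; rw [ha s hsm hst]
    · right
      refine ⟨?_, ?_⟩
      · exact (Nat.ne_of_lt (vtx_lt ht (qlt hq ht).2)).symm
      · exact mem_encL.mpr (Or.inr ⟨hp, rfl⟩)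

lemma genF_image_self {n : ℕ} (S : Finset (Fin n)) : genF n (S.image Fin.val) = S := by
  ext v
  rw [mem_genF, Finset.mem_image]
  constructor
  · rintro ⟨w, hw, hww⟩
    rwa [Fin.val_injective hww] at hw
  · intro hv; exact ⟨v, hv, rfl⟩

lemma same_track_nonadj {m B par n : ℕ} {y z : Fin n} {t ry rz : ℕ}
    (ht : t < m) (hry : ry < W B) (hrz : rz < W B)
    (hyv : y.val = vtx B t ry) (hzv : z.val = vtx B t rz) (hne : y ≠ z)
    (hnadj : ¬ (G m B par n).Adj y z) : ry = rz + 1 ∨ rz = ry + 1 := by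
  by_contra hcon
  push_neg at hcon
  apply hnadj
  refine G_adj.mpr ⟨hne, Or.inl (Or.inr ?_)⟩
  rw [hyv, hzv]
  refine ⟨vtx_lt ht hry, vtx_lt ht hrz, Or.inl ?_⟩
  rw [vtx_div hry, vtx_div hrz, vtx_mod hry, vtx_mod hrz]
  exact ⟨rfl, hcon.1, hcon.2⟩

lemma adj_classify {m B par n : ℕ} {q : ℕ → ℕ}
    (hm : 1 ≤ m) (hpar : par ≤ 1) (hn : m * W B + par ≤ n)
    (hv : ValidQ m B q)
    {I J : {s : Finset (Fin n) // s.card = 2*m+par ∧ IndepFinset (G m B par n) s}}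
    (hI : I.val = encF m B par n q)
    (hadj : (ConfigGraph (G m B par n) (2*m+par)).Adj I J) :
    ∃ q' t, ValidQ m B q' ∧ J.val = encF m B par n q' ∧ t < m ∧
      (∀ s, s < m → s ≠ t → q' s = q s) ∧ (q' t = q t + 1 ∨ q t = q' t + 1) := by
  obtain ⟨hne, hInter⟩ := (hadj : I ≠ J ∧ _)
  set S := (I : Finset (Fin n)) with hS
  set T := (J : Finset (Fin n)) with hT
  have hcardS : S.card = 2*m+par := I.2.1
  have hcardT : T.card = 2*m+par := J.2.1
  have indepT : IndepFinset (G m B par n) T := J.2.2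
  -- extract the moved token
  have hsd1 : (S \ T).card = 1 := by
    have := Finset.card_inter_add_card_sdiff S T
    omega
  have hsd2 : (T \ S).card = 1 := by
    have := Finset.card_inter_add_card_sdiff T S
    rw [Finset.inter_comm] at this
    omega
  obtain ⟨x, hx⟩ := Finset.card_eq_one.mp hsd1
  obtain ⟨y, hy⟩ := Finset.card_eq_one.mp hsd2
  have hxS : x ∈ S := (Finset.mem_sdiff.mp (hx ▸ Finset.mem_singleton_self x)).1
  have hxT : x ∉ T := (Finset.mem_sdiff.mp (hx ▸ Finset.mem_singleton_self x)).2
  have hyT : y ∈ T := (Finset.mem_sdiff.mp (hy ▸ Finset.mem_singleton_self y)).1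
  have hyS : y ∉ S := (Finset.mem_sdiff.mp (hy ▸ Finset.mem_singleton_self y)).2
  have hsub : S.erase x ⊆ T := by
    intro v hvv
    obtain ⟨hv1, hv2⟩ := Finset.mem_erase.mp hvv
    by_contra hvT
    have : v ∈ S \ T := Finset.mem_sdiff.mpr ⟨hv2, hvT⟩
    rw [hx] at this
    exact hv1 (Finset.mem_singleton.mp this)
  have hTeq : T = insert y (S.erase x) := by
    symm
    apply Finset.eq_of_subset_of_card_le
    · intro v hvv
      rcases Finset.mem_insert.mp hvv with rfl | hvv
      · exact hyT
      · exact hsub hvv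
    · rw [Finset.card_insert_of_notMem (fun hc => hyS (Finset.mem_of_mem_erase hc)),
        Finset.card_erase_of_mem hxS, hcardS, hcardT]
      omega
  -- memberships at value level
  have hSL : ∀ v : Fin n, v ∈ S ↔ v.val ∈ encL m B par q := by
    intro v; rw [hI]; unfold encF; exact mem_genF
  have hk2 : 2 ≤ 2*m+par := by omega
  -- a remaining token exists
  have hzR : ∃ z, z ∈ S.erase x := by
    apply Finset.card_pos.mp
    rw [Finset.card_erase_of_mem hxS, hcardS]
    omega
  -- y is not a padding vertex
  have hypad : y.val < m * W B + par := by
    by_contra hpad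
    obtain ⟨z, hz⟩ := hzR
    have hzT : z ∈ T := hsub hz
    have hzy : z ≠ y := fun hc => hyS (hc ▸ Finset.mem_of_mem_erase hz)
    refine indepT y hyT z hzT hzy.symm (G_adj.mpr ⟨hzy.symm, Or.inl (Or.inl (by omega))⟩)
  -- y is not the special vertex
  have hyMW : y.val < m * W B := by
    rcases Nat.lt_or_ge y.val (m * W B) with h | h
    · exact h
    · exfalso
      have hyval : y.val = m * W B := by omega
      have hpar1 : 0 < par := by omega
      have hspec : (⟨m * W B, by omega⟩ : Fin n) ∈ S :=
        (hSL _).mpr (mem_encL.mpr (Or.inr ⟨hpar1, rfl⟩))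
      have : y = (⟨m * W B, by omega⟩ : Fin n) := Fin.ext hyval
      exact hyS (this ▸ hspec)
  obtain ⟨ty, ry, hty, hryW, hydec⟩ := vtx_decomp hyMW
  -- the two tokens of track ty in S
  have hb0 : vtx B ty (q ty) < n := (vtx_lt hty (qlt hv.1 hty).1).trans_le (by omega)
  have hb1 : vtx B ty (q ty + 1) < n := (vtx_lt hty (qlt hv.1 hty).2).trans_le (by omega)
  set z0 : Fin n := ⟨vtx B ty (q ty), hb0⟩ with hz0
  set z1 : Fin n := ⟨vtx B ty (q ty + 1), hb1⟩ with hz1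
  have hz0S : z0 ∈ S := (hSL _).mpr (mem_encL.mpr (Or.inl ⟨ty, hty, Or.inl rfl⟩))
  have hz1S : z1 ∈ S := (hSL _).mpr (mem_encL.mpr (Or.inl ⟨ty, hty, Or.inr rfl⟩))
  have hyz0 : y ≠ z0 := fun hc => hyS (hc ▸ hz0S)
  have hyz1 : y ≠ z1 := fun hc => hyS (hc ▸ hz1S)
  have hry0 : ry ≠ q ty := by
    intro hc
    exact hyz0 (Fin.ext (by rw [hydec, hz0, hc]))
  have hry1 : ry ≠ q ty + 1 := by
    intro hc
    exact hyz1 (Fin.ext (by rw [hydec, hz1, hc]))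
  -- helper producing the slide constraint wrt a remaining token of track ty
  have hcons : ∀ z : Fin n, z ∈ T → z ≠ y → ∀ rz, rz < W B → z.val = vtx B ty rz →
      ry = rz + 1 ∨ rz = ry + 1 := by
    intro z hzT hzy rz hrzW hzdec
    exact same_track_nonadj hty hryW hrzW hydec hzdec (Ne.symm hzy)
      (fun hadj => indepT y hyT z hzT hzy.symm hadj)
  -- x must be one of the two tokens of track ty
  have hxz : x = z0 ∨ x = z1 := by
    by_contra hcon
    push_neg at hcon
    have hz0T : z0 ∈ T := hsub (Finset.mem_erase.mpr ⟨fun hc => hcon.1 hc.symm, hz0S⟩)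
    have hz1T : z1 ∈ T := hsub (Finset.mem_erase.mpr ⟨fun hc => hcon.2 hc.symm, hz1S⟩)
    have h0 := hcons z0 hz0T (Ne.symm hyz0) (q ty) (qlt hv.1 hty).1 rfl
    have h1 := hcons z1 hz1T (Ne.symm hyz1) (q ty + 1) (qlt hv.1 hty).2 rfl
    rcases h0 with h0 | h0 <;> rcases h1 with h1 | h1 <;> omega
  -- T at value level
  have hTim : T.image Fin.val = insert y.val ((encL m B par q).erase x.val) := by
    rw [hTeq, Finset.image_insert, Finset.image_erase Fin.val_injective, hI]
    unfold encF
    rw [genF_image (encL_lt hv.1 hn)]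
  rcases hxz with rfl | rfl
  · -- token moved up: x = z0, new pair {q ty + 1, q ty + 2}, ry = q ty + 2
    have hz1T : z1 ∈ T := hsub (Finset.mem_erase.mpr
      ⟨fun hc => absurd (vtx_inj (qlt hv.1 hty).2 (qlt hv.1 hty).1
        (congrArg Fin.val hc)).2 (by omega), hz1S⟩)
    have h1 := hcons z1 hz1T (Ne.symm hyz1) (q ty + 1) (qlt hv.1 hty).2 rfl
    have hryv : ry = q ty + 2 := by rcases h1 with h1 | h1 <;> omega
    set q' : ℕ → ℕ := Function.update q ty (q ty + 1) with hq'
    have hq't : q' ty = q ty + 1 := Function.update_self ty _ q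
    have hagree : ∀ s, s < m → s ≠ ty → q' s = q s := by
      intro s _ hst; exact Function.update_of_ne hst _ q
    have hqok' : Qok m B q' := qok_step hv.1 hty hagree hq't
      (by have hW : W B = 3*B+2 := rfl; omega)
    have hTenc : T = encF m B par n q' := by
      have him : T.image Fin.val = encL m B par q' := by
        rw [hTim, ← encL_insert_erase hv.1 hqok' hty hagree hq't]
        congr 1
        rw [hydec, hryv]
      rw [← genF_image_self T, him]; rfl
    refine ⟨q', ty, ?_, hTenc, hty, hagree, Or.inl hq't⟩
    exact valid_of_indep hqok' hn (by rw [← hTenc]; exact indepT)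
  · -- token moved down: x = z1, ry + 1 = q ty
    have hz0T : z0 ∈ T := hsub (Finset.mem_erase.mpr
      ⟨fun hc => absurd (vtx_inj (qlt hv.1 hty).1 (qlt hv.1 hty).2
        (congrArg Fin.val hc)).2 (by omega), hz0S⟩)
    have h0 := hcons z0 hz0T (Ne.symm hyz0) (q ty) (qlt hv.1 hty).1 rfl
    have hryv : ry + 1 = q ty := by rcases h0 with h0 | h0 <;> omega
    set q' : ℕ → ℕ := Function.update q ty ry with hq'
    have hq't : q' ty = ry := Function.update_self ty _ q
    have hagree : ∀ s, s < m → s ≠ ty → q' s = q s := by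
      intro s _ hst; exact Function.update_of_ne hst _ q
    have hagree' : ∀ s, s < m → s ≠ ty → q s = q' s := fun s h1 h2 => (hagree s h1 h2).symm
    have hqok' : Qok m B q' := by
      intro s hsm
      by_cases hst : s = ty
      · subst hst; rw [hq't]; have := hv.1 s hsm; omega
      · rw [hagree s hsm hst]; exact hv.1 s hsm
    have hstep' : q ty = q' ty + 1 := by rw [hq't]; omega
    have hTenc : T = encF m B par n q' := by
      have him : T.image Fin.val = encL m B par q' := by
        rw [hTim]
        have hlem := encL_insert_erase_down (m := m) (par := par) hv.1 hqok' hty hagree hstep'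
        have e1 : y.val = vtx B ty (q' ty) := by rw [hydec, hq't]
        have e2 : (z1 : Fin n).val = vtx B ty (q ty + 1) := rfl
        rw [e1, e2, hlem]
      rw [← genF_image_self T, him]; rfl
    refine ⟨q', ty, ?_, hTenc, hty, hagree, Or.inr hstep'⟩
    exact valid_of_indep hqok' hn (by rw [← hTenc]; exact indepT)

end TJL
namespace TJL

/-! ### Potential on configuration vertices, walk bound -/

def GoodV (m B par n : ℕ)
    (I : {s : Finset (Fin n) // s.card = 2*m+par ∧ IndepFinset (G m B par n) s}) : Prop :=
  ∃ q, ValidQ m B q ∧ I.val = encF m B par n q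

noncomputable def phiV (m B par n : ℕ)
    (I : {s : Finset (Fin n) // s.card = 2*m+par ∧ IndepFinset (G m B par n) s}) : ℤ :=
  if h : GoodV m B par n I then Phi B m (Classical.choose h) else 0

lemma phiV_eq {m B par n : ℕ} (hn : m * W B + par ≤ n) {q : ℕ → ℕ} (hq : ValidQ m B q)
    {I : {s : Finset (Fin n) // s.card = 2*m+par ∧ IndepFinset (G m B par n) s}}
    (hI : I.val = encF m B par n q) : phiV m B par n I = Phi B m q := by
  have hg : GoodV m B par n I := ⟨q, hq, hI⟩
  rw [phiV, dif_pos hg]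
  obtain ⟨hq2, hI2⟩ := Classical.choose_spec hg
  have heq : encF m B par n (Classical.choose hg) = encF m B par n q := by rw [← hI2, hI]
  have heqL : encL m B par (Classical.choose hg) = encL m B par q :=
    genF_inj (encL_lt hq2.1 hn) (encL_lt hq.1 hn) heq
  exact Phi_congr (fun t ht => encL_inj hq2.1 hq.1 heqL t ht)

lemma good_step {m B par n : ℕ} (hm : 1 ≤ m) (hpar : par ≤ 1) (hBe : B % 2 = 0)
    (hn : m * W B + par ≤ n)
    {I J : {s : Finset (Fin n) // s.card = 2*m+par ∧ IndepFinset (G m B par n) s}}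
    (hg : GoodV m B par n I)
    (hadj : (ConfigGraph (G m B par n) (2*m+par)).Adj I J) :
    GoodV m B par n J ∧ |phiV m B par n I - phiV m B par n J| ≤ 1 := by
  obtain ⟨q, hq, hI⟩ := hg
  obtain ⟨q', t, hq', hJ, ht, ha, hstep⟩ := adj_classify hm hpar hn hq hI hadj
  refine ⟨⟨q', hq', hJ⟩, ?_⟩
  rw [phiV_eq hn hq hI, phiV_eq hn hq' hJ]
  rcases hstep with h | h
  · rcases phi_step hm hBe hq hq' ht ha h with he | he
    · rw [show Phi B m q - Phi B m q' = -1 by omega]; norm_num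
    · rw [show Phi B m q - Phi B m q' = 1 by omega]; norm_num
  · have ha' : ∀ s, s < m → s ≠ t → q s = q' s := fun s h1 h2 => (ha s h1 h2).symm
    rcases phi_step hm hBe hq' hq ht ha' h with he | he
    · rw [show Phi B m q - Phi B m q' = 1 by omega]; norm_num
    · rw [show Phi B m q - Phi B m q' = -1 by omega]; norm_num

lemma walk_bd {V : Type*} {H : SimpleGraph V} {Good : V → Prop} {φ : V → ℤ}
    (hstep : ∀ a b, Good a → H.Adj a b → Good b ∧ |φ a - φ b| ≤ 1) :
    ∀ {a b : V} (w : H.Walk a b), Good a → |φ a - φ b| ≤ (w.length : ℤ) := by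
  intro a b w
  induction w with
  | nil => intro _; simp
  | @cons u v c hadj p ih =>
    intro hg
    obtain ⟨hg2, h1⟩ := hstep u v hg hadj
    have h2 := ih hg2
    have htri := abs_sub_le (φ u) (φ v) (φ c)
    rw [SimpleGraph.Walk.length_cons]
    push_cast
    linarith

lemma dist_bd {V : Type*} {H : SimpleGraph V} {Good : V → Prop} {φ : V → ℤ}
    (hstep : ∀ a b, Good a → H.Adj a b → Good b ∧ |φ a - φ b| ≤ 1)
    {a b : V} (hr : H.Reachable a b) (hg : Good a) :
    |φ a - φ b| ≤ (H.dist a b : ℤ) := by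
  obtain ⟨w, hw⟩ := hr.exists_walk_length_eq_dist
  rw [← hw]
  exact walk_bd hstep w hg

end TJL
namespace TJL

/-! ### Reachability: sweeping the counter -/

def fill (q : ℕ → ℕ) (j c : ℕ) : ℕ → ℕ := fun t => if t < j then c else q t

lemma valid_fill {m B : ℕ} {q : ℕ → ℕ} (hq : Qok m B q)
    (hrest : ∀ t, t < m → q t % 3 = 0) {j c : ℕ} (hc : c = 0 ∨ c = 3*B) :
    ValidQ m B (fill q j c) := by
  constructor
  · intro t ht
    unfold fill
    split
    · omega
    · exact hq t ht
  · intro t ht h3 s hst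
    exfalso
    unfold fill at h3
    split at h3
    · omega
    · exact h3 (hrest t ht)

lemma qok_update {m B : ℕ} {q : ℕ → ℕ} (hq : Qok m B q) {j v : ℕ} (hv : v ≤ 3*B) :
    Qok m B (Function.update q j v) := by
  intro t ht
  by_cases htj : t = j
  · subst htj; rw [Function.update_self]; omega
  · rw [Function.update_of_ne htj]; exact hq t ht

lemma rest_update {m : ℕ} {q : ℕ → ℕ} (hrest : ∀ t, t < m → q t % 3 = 0)
    {j v : ℕ} (h3 : v % 3 = 0) : ∀ t, t < m → Function.update q j v t % 3 = 0 := by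
  intro t ht
  by_cases htj : t = j
  · subst htj; rw [Function.update_self]; exact h3
  · rw [Function.update_of_ne htj]; exact hrest t ht

lemma valid_climb {m B : ℕ} {q : ℕ → ℕ} (hq : Qok m B q)
    (hrest : ∀ t, t < m → q t % 3 = 0)
    {j v e : ℕ} (hj : j < m) (hv : v ≤ 3*B) (he : e = 0 ∨ e = 3*B)
    (hpk : v % 3 ≠ 0 → e = park B (v / 3)) :
    ValidQ m B (fill (Function.update q j v) j e) := by
  constructor
  · intro t ht
    unfold fill
    split
    · rcases he with rfl | rfl <;> omega
    · by_cases htj : t = j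
      · subst htj; rw [Function.update_self]; exact hv
      · rw [Function.update_of_ne htj]; exact hq t ht
  · intro t ht h3 s hst
    unfold fill at h3 ⊢
    by_cases h1 : t < j
    · rw [if_pos h1] at h3
      exfalso
      rcases he with rfl | rfl <;> omega
    · rw [if_neg h1] at h3
      by_cases htj : t = j
      · subst htj
        rw [Function.update_self] at h3
        rw [if_pos (by omega : s < t), if_neg h1, Function.update_self]
        exact hpk h3
      · exfalso
        rw [Function.update_of_ne htj] at h3
        exact h3 (hrest t ht)

lemma fill_fill_zero {q : ℕ → ℕ} {j : ℕ} :
    ∀ t, fill (Function.update q j 0) j 0 t = fill q (j+1) 0 t := by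
  intro t
  unfold fill
  by_cases h1 : t < j
  · rw [if_pos h1, if_pos (by omega : t < j + 1)]
  · rw [if_neg h1]
    by_cases h2 : t = j
    · subst h2; rw [Function.update_self, if_pos (by omega)]
    · rw [Function.update_of_ne h2, if_neg (by omega : ¬ t < j + 1)]

lemma fill_fill_top {B : ℕ} {q : ℕ → ℕ} {j : ℕ} :
    ∀ t, fill (Function.update q j (3*B)) j (3*B) t = fill q (j+1) (3*B) t := by
  intro t
  unfold fill
  by_cases h1 : t < j
  · rw [if_pos h1, if_pos (by omega : t < j + 1)]
  · rw [if_neg h1]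
    by_cases h2 : t = j
    · subst h2; rw [Function.update_self, if_pos (by omega)]
    · rw [Function.update_of_ne h2, if_neg (by omega : ¬ t < j + 1)]

lemma reach_flip {m B par n : ℕ} (hpar : par ≤ 1) (hn : m * W B + par ≤ n) :
    ∀ j, j ≤ m → ∀ (q : ℕ → ℕ), Qok m B q → (∀ t, t < m → q t % 3 = 0) →
    ∀ (a b : ℕ), (a = 0 ∨ a = 3*B) → (b = 0 ∨ b = 3*B) →
    ∀ (hv1 : ValidQ m B (fill q j a)) (hv2 : ValidQ m B (fill q j b)),
      (ConfigGraph (G m B par n) (2*m+par)).Reachable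
        (cfg m B par n (fill q j a) hv1 hpar hn)
        (cfg m B par n (fill q j b) hv2 hpar hn) := by
  intro j
  induction j with
  | zero =>
    intro hjm q hq hrest a b ha hb hv1 hv2
    have heq : cfg m B par n (fill q 0 a) hv1 hpar hn
        = cfg m B par n (fill q 0 b) hv2 hpar hn :=
      cfg_congr (fun t _ => by unfold fill; simp)
    rw [heq]
  | succ j ih =>
    intro hjm1 q hq hrest a b ha hb hv1 hv2
    have hjm : j < m := by omega
    -- the climb: from the all-zero configuration up to track j at 3*i, lower tracks at e
    have key : ∀ i, i ≤ B → ∀ e, (e = 0 ∨ e = 3*B) →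
        ∀ (hw1 : ValidQ m B (fill q (j+1) 0))
          (hw2 : ValidQ m B (fill (Function.update q j (3*i)) j e)),
        (ConfigGraph (G m B par n) (2*m+par)).Reachable
          (cfg m B par n (fill q (j+1) 0) hw1 hpar hn)
          (cfg m B par n (fill (Function.update q j (3*i)) j e) hw2 hpar hn) := by
      intro i
      induction i with
      | zero =>
        intro _ e he hw1 hw2
        have hstart : ∀ (hv : ValidQ m B (fill (Function.update q j 0) j 0)),
            cfg m B par n (fill q (j+1) 0) hw1 hpar hn
              = cfg m B par n (fill (Function.update q j 0) j 0) hv hpar hn := by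
          intro hv
          exact cfg_congr (fun t _ => (fill_fill_zero t).symm)
        have hok' : Qok m B (Function.update q j 0) := qok_update hq (by omega)
        have hrest' : ∀ t, t < m → Function.update q j 0 t % 3 = 0 :=
          rest_update hrest (by omega)
        have hv0 : ValidQ m B (fill (Function.update q j 0) j 0) :=
          valid_fill hok' hrest' (Or.inl rfl)
        have heq2 : cfg m B par n (fill (Function.update q j (3*0)) j e) hw2 hpar hn
            = cfg m B par n (fill (Function.update q j 0) j e)
              (valid_fill hok' hrest' he) hpar hn :=
          cfg_congr (fun t _ => by norm_num)
        rw [hstart hv0, heq2]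
        exact ih (by omega) _ hok' hrest' 0 e (Or.inl rfl) he hv0 (valid_fill hok' hrest' he)
      | succ i ihi =>
        intro hiB e he hw1 hw2
        have hi3 : 3*i + 3 ≤ 3*B := by omega
        set eP := park B i with hEP
        have heP : eP = 0 ∨ eP = 3*B := park_cases B i
        have hvmid : ∀ v, 3*i ≤ v → v ≤ 3*i+3 →
            ValidQ m B (fill (Function.update q j v) j eP) := by
          intro v h1 h2
          refine valid_climb hq hrest hjm (by omega) heP ?_
          intro h3
          have : v / 3 = i := by omega
          rw [this, hEP]
        have hv0 := hvmid (3*i) (by omega) (by omega)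
        have hv1' := hvmid (3*i+1) (by omega) (by omega)
        have hv2' := hvmid (3*i+2) (by omega) (by omega)
        have hv3 := hvmid (3*i+3) (by omega) (by omega)
        have hstep : ∀ v, 3*i ≤ v → v + 1 ≤ 3*i+3 →
            ∀ (ha1 : ValidQ m B (fill (Function.update q j v) j eP))
              (ha2 : ValidQ m B (fill (Function.update q j (v+1)) j eP)),
            (ConfigGraph (G m B par n) (2*m+par)).Adj
              (cfg m B par n (fill (Function.update q j v) j eP) ha1 hpar hn)
              (cfg m B par n (fill (Function.update q j (v+1)) j eP) ha2 hpar hn) := by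
          intro v hva hvb ha1 ha2
          refine step_adj hpar hn ha1 ha2 hjm ?_ ?_ ?_
          · intro s hsm hsj
            unfold fill
            by_cases h1 : s < j
            · rw [if_pos h1, if_pos h1]
            · rw [if_neg h1, if_neg h1, Function.update_of_ne hsj, Function.update_of_ne hsj]
          · unfold fill
            rw [if_neg (by omega : ¬ j < j), if_neg (by omega : ¬ j < j),
              Function.update_self, Function.update_self]
          · unfold fill
            rw [if_neg (by omega : ¬ j < j), Function.update_self]
            omega
        have hr0 := ihi (by omega) eP heP hw1 hv0
        have hr1 := (hstep (3*i) (by omega) (by omega) hv0 hv1').reachable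
        have hr2 := (hstep (3*i+1) (by omega) (by omega) hv1' (by
          rw [show 3*i+1+1 = 3*i+2 by omega]; exact hv2')).reachable
        have hr3 := (hstep (3*i+2) (by omega) (by omega) hv2' (by
          rw [show 3*i+2+1 = 3*i+3 by omega]; exact hv3)).reachable
        have hok3 : Qok m B (Function.update q j (3*(i+1))) :=
          qok_update hq (by omega)
        have hrest3 : ∀ t, t < m → Function.update q j (3*(i+1)) t % 3 = 0 :=
          rest_update hrest (by omega)
        have hflip := ih (by omega) (Function.update q j (3*(i+1))) hok3 hrest3
          eP e heP he (valid_fill hok3 hrest3 heP) (valid_fill hok3 hrest3 he)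
        have hcongr1 : cfg m B par n (fill (Function.update q j (3*i+3)) j eP) hv3 hpar hn
            = cfg m B par n (fill (Function.update q j (3*(i+1))) j eP)
              (valid_fill hok3 hrest3 heP) hpar hn := by
          apply cfg_congr
          intro t _
          unfold fill
          by_cases h1 : t < j
          · rw [if_pos h1, if_pos h1]
          · rw [if_neg h1, if_neg h1]
            by_cases h2 : t = j
            · subst h2; rw [Function.update_self, Function.update_self]; omega
            · rw [Function.update_of_ne h2, Function.update_of_ne h2]
        have hcongr2 : cfg m B par n (fill (Function.update q j (3*(i+1))) j e)
              (valid_fill hok3 hrest3 he) hpar hn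
            = cfg m B par n (fill (Function.update q j (3*(i+1))) j e) hw2 hpar hn :=
          cfg_congr (fun t _ => rfl)
        have h5 : (ConfigGraph (G m B par n) (2*m+par)).Reachable
            (cfg m B par n (fill (Function.update q j (3*i+3)) j eP) hv3 hpar hn)
            (cfg m B par n (fill (Function.update q j (3*(i+1))) j e) hw2 hpar hn) := by
          rw [hcongr1]
          rw [hcongr2] at hflip
          exact hflip
        exact (((hr0.trans hr1).trans hr2).trans hr3).trans h5
    -- use `key` to settle all four endpoint cases
    have main : ∀ (hva : ValidQ m B (fill q (j+1) 0)) (hvb : ValidQ m B (fill q (j+1) (3*B))),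
        (ConfigGraph (G m B par n) (2*m+par)).Reachable
          (cfg m B par n (fill q (j+1) 0) hva hpar hn)
          (cfg m B par n (fill q (j+1) (3*B)) hvb hpar hn) := by
      intro hva hvb
      have hokB : Qok m B (Function.update q j (3*B)) := qok_update hq (by omega)
      have hresB : ∀ t, t < m → Function.update q j (3*B) t % 3 = 0 :=
        rest_update hrest (by omega)
      have hvB : ValidQ m B (fill (Function.update q j (3*B)) j (3*B)) :=
        valid_fill hokB hresB (Or.inr rfl)
      have h1 := key B le_rfl (3*B) (Or.inr rfl) hva hvB
      have heq : cfg m B par n (fill (Function.update q j (3*B)) j (3*B)) hvB hpar hn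
          = cfg m B par n (fill q (j+1) (3*B)) hvb hpar hn :=
        cfg_congr (fun t _ => fill_fill_top t)
      exact heq ▸ h1
    rcases ha with rfl | rfl <;> rcases hb with rfl | rfl
    · exact (cfg_congr (fun t _ => rfl) : cfg m B par n (fill q (j+1) 0) hv1 hpar hn = _) ▸
        SimpleGraph.Reachable.refl _
    · exact main hv1 hv2
    · exact (main hv2 hv1).symm
    · exact (cfg_congr (fun t _ => rfl) :
        cfg m B par n (fill q (j+1) (3*B)) hv1 hpar hn = _) ▸ SimpleGraph.Reachable.refl _

end TJL
namespace TJL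

lemma main_bound {m B par n : ℕ} (hm : 1 ≤ m) (hB : 1 ≤ B) (hBe : B % 2 = 0)
    (hpar : par ≤ 1) (hn : m * W B + par ≤ n) :
    Mx B m ≤ D n (2*m+par) := by
  have hok0 : Qok m B (fun _ => 0) := fun t _ => Nat.zero_le _
  have hrest0 : ∀ t, t < m → (fun _ => (0:ℕ)) t % 3 = 0 := fun t _ => rfl
  have hvf0 : ValidQ m B (fill (fun _ => 0) m 0) := valid_fill hok0 hrest0 (Or.inl rfl)
  have hvf1 : ValidQ m B (fill (fun _ => 0) m (3*B)) := valid_fill hok0 hrest0 (Or.inr rfl)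
  set H := ConfigGraph (G m B par n) (2*m+par) with hH
  set I0 := cfg m B par n (fill (fun _ => 0) m 0) hvf0 hpar hn with hI0
  set I1 := cfg m B par n (fill (fun _ => 0) m (3*B)) hvf1 hpar hn with hI1
  have hreach : H.Reachable I0 I1 :=
    reach_flip hpar hn m le_rfl (fun _ => 0) hok0 hrest0 0 (3*B)
      (Or.inl rfl) (Or.inr rfl) hvf0 hvf1
  have hphi0 : phiV m B par n I0 = 0 := by
    rw [hI0, phiV_eq hn hvf0 rfl]
    have := Phi_park (B := B) hBe (i := 1) (j := m) (q := fill (fun _ => 0) m 0)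
      (by intro t ht; unfold fill park; rw [if_pos ht, if_neg (by norm_num)])
    rw [this, if_neg (by norm_num)]
  have hphi1 : phiV m B par n I1 = (Mx B m : ℤ) := by
    rw [hI1, phiV_eq hn hvf1 rfl]
    have := Phi_park (B := B) hBe (i := 0) (j := m) (q := fill (fun _ => 0) m (3*B))
      (by intro t ht; unfold fill park; rw [if_pos ht, if_pos (by norm_num)])
    rw [this, if_pos (by norm_num)]
  have hstep : ∀ a b, GoodV m B par n a → H.Adj a b →
      GoodV m B par n b ∧ |phiV m B par n a - phiV m B par n b| ≤ 1 :=
    fun a b hg hadj => good_step hm hpar hBe hn hg hadj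
  have hdist := dist_bd hstep hreach ⟨fill (fun _ => 0) m 0, hvf0, rfl⟩
  rw [hphi0, hphi1, zero_sub, abs_neg, abs_of_nonneg (Int.natCast_nonneg _)] at hdist
  have hd : Mx B m ≤ H.dist I0 I1 := by exact_mod_cast hdist
  have h1 : H.dist I0 I1 ≤ compDiam H I0 :=
    compDiam_ge H I0 I0 I1 (SimpleGraph.Reachable.refl _) hreach
  have h2 : compDiam H I0 ≤ maxCompDiam H := maxCompDiam_ge H I0
  have h3 : maxCompDiam H ≤ D n (2*m+par) := D_ge n (2*m+par) (G m B par n)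
  exact hd.trans (h1.trans (h2.trans h3))

end TJL

theorem D_half_lower' (k : ℕ) (hk : 2 ≤ k) :
    ∃ c : ℝ, 0 < c ∧ ∃ N : ℕ, ∀ n : ℕ, N ≤ n →
      c * (n : ℝ) ^ (k / 2) ≤ (D n k : ℝ) := by
  open TJL in
  set m := k / 2 with hmdef
  set par := k % 2 with hpardef
  have hm1 : 1 ≤ m := by omega
  have hpar1 : par ≤ 1 := by omega
  have hk2 : k = 2*m + par := by omega
  have hmR : (0:ℝ) < (m:ℝ) := by exact_mod_cast hm1
  refine ⟨(1 / (12*(m:ℝ)))^m, pow_pos (by positivity) m, 24*m, ?_⟩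
  intro n hn
  set d := n / (12*m) with hddef
  have hd2 : 2 ≤ d := by
    rw [hddef]
    exact (Nat.le_div_iff_mul_le (by omega)).mpr (by omega)
  set B := 2*d with hBdef
  have hBe : B % 2 = 0 := by omega
  have hB1 : 1 ≤ B := by omega
  have hdm : (12*m)*d + n % (12*m) = n := Nat.div_add_mod n (12*m)
  have hmod : n % (12*m) < 12*m := Nat.mod_lt _ (by omega)
  have hE2 : (12*m)*2 ≤ (12*m)*d := Nat.mul_le_mul_left _ hd2
  have hE2' : 2*m ≤ m*d := by
    calc 2*m = m*2 := by ring
    _ ≤ m*d := Nat.mul_le_mul_left m hd2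
  have h7 : (12*m)*d = 12*(m*d) := by ring
  rw [h7] at hdm
  have hnn : m * W B + par ≤ n := by
    have h6 : m * W B = 6*(m*d) + 2*m := by
      rw [show W B = 3*B+2 from rfl, hBdef]; ring
    omega
  have hmain := TJL.main_bound hm1 hB1 hBe hpar1 hnn
  rw [← hk2] at hmain
  have hnB : (n:ℝ) ≤ 12*(m:ℝ)*(B:ℝ) := by
    have hN : n ≤ 12*m*B := by
      have h3 : 12*m*B = 2*(12*(m*d)) := by rw [hBdef]; ring
      omega
    exact_mod_cast hN
  have h1 : ((1:ℝ)/(12*(m:ℝ)))^m * (n:ℝ)^m = ((n:ℝ)/(12*(m:ℝ)))^m := by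
    rw [← mul_pow]
    congr 1
    ring
  have h2 : ((n:ℝ)/(12*(m:ℝ))) ≤ (B:ℝ) := by
    rw [div_le_iff₀ (by positivity)]
    linarith
  have h3 : ((n:ℝ)/(12*(m:ℝ)))^m ≤ (B:ℝ)^m :=
    pow_le_pow_left₀ (by positivity) h2 m
  have h4 : ((B:ℝ))^m ≤ ((Mx B m : ℕ) : ℝ) := by
    exact_mod_cast Nat.cast_le.mpr (TJL.Mx_ge hm1)
  have h5 : ((Mx B m : ℕ):ℝ) ≤ (D n k : ℝ) := Nat.cast_le.mpr hmain
  calc (1 / (12*(m:ℝ)))^m * (n : ℝ) ^ m = ((n:ℝ)/(12*(m:ℝ)))^m := h1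
    _ ≤ (B:ℝ)^m := h3
    _ ≤ ((Mx B m : ℕ) : ℝ) := h4
    _ ≤ (D n k : ℝ) := h5

/-- For every `k ≥ 2`, `D(n,k) = Ω_k(n^⌊k/2⌋)`. -/
theorem D_half_lower (k : ℕ) (hk : 2 ≤ k) :
    ∃ c : ℝ, 0 < c ∧ ∃ N : ℕ, ∀ n : ℕ, N ≤ n →
      c * (n : ℝ) ^ (k / 2) ≤ (D n k : ℝ) := by
  exact D_half_lower' k hk
end

section
/- For every finite simple graph G, there exists a graph G' on the same vertex set with E(G) ⊆ E(G') such that the 3-token-jumping configuration graph R_3(G') is a path, and the maximum diameter of a connected component of R_3(G) equals the maximum diameter of a connected component of R_3(G'). -/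
/-!
Common definitions: independent sets of a given size, the token-jumping configuration
graph `R_k(G)`, diameters of connected components, and the extremal function `D n k`.
-/

open Finset SimpleGraph

attribute [local instance] Classical.propDecidable

namespace CTP
set_option linter.unusedSectionVars false

variable {V : Type*} [Fintype V] [DecidableEq V]

abbrev Cfg (G : SimpleGraph V) := {s : Finset V // s.card = 3 ∧ IndepFinset G s}

lemma config_adj (G : SimpleGraph V) (I J : Cfg G) :
    (ConfigGraph G 3).Adj I J ↔ I ≠ J ∧ ((I : Finset V) ∩ (J : Finset V)).card = 2 :=
  Iff.rfl

lemma dist_triangle'' {α : Type*} (H : SimpleGraph α) {u v w : α}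
    (h1 : H.Reachable u v) (h2 : H.Reachable v w) :
    H.dist u w ≤ H.dist u v + H.dist v w := by
  obtain ⟨p, hp⟩ := h1.exists_walk_length_eq_dist
  obtain ⟨q, hq⟩ := h2.exists_walk_length_eq_dist
  rw [← hp, ← hq, ← SimpleGraph.Walk.length_append]
  exact SimpleGraph.dist_le _

lemma cfg_eq {G : SimpleGraph V} {I J : Cfg G} (h : 3 ≤ (I.1 ∩ J.1).card) : I = J := by
  have h1 : I.1 ∩ J.1 = I.1 :=
    Finset.eq_of_subset_of_card_le Finset.inter_subset_left (by rw [I.2.1]; exact h)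
  have h2 : I.1 ⊆ J.1 := h1 ▸ Finset.inter_subset_right
  exact Subtype.ext (Finset.eq_of_subset_of_card_le h2 (by rw [I.2.1, J.2.1]))

lemma dist_le_one {G : SimpleGraph V} {I J : Cfg G} (h : 2 ≤ (I.1 ∩ J.1).card) :
    (ConfigGraph G 3).dist I J ≤ 1 := by
  by_cases he : I = J
  · rw [he, SimpleGraph.dist_self]; omega
  · have h3 : (I.1 ∩ J.1).card ≤ 3 :=
      le_trans (Finset.card_le_card Finset.inter_subset_left) (le_of_eq I.2.1)
    have hc : (I.1 ∩ J.1).card = 2 := by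
      by_contra hc
      exact he (cfg_eq (by omega))
    exact le_of_eq (SimpleGraph.dist_eq_one_iff_adj.2 ⟨he, by omega⟩)

end CTP

namespace CTP
set_option linter.unusedSectionVars false

variable {V : Type*} [Fintype V] [DecidableEq V]

lemma no_stray_core {A B C : Finset V} (hB : B.card = 3)
    {v a b : V}
    (hAv : v ∈ A) (hAa : a ∈ A) (hBa : a ∈ B) (hBb : b ∈ B) (hCv : v ∈ C) (hCb : b ∈ C)
    (hvB : v ∉ B) (hbA : b ∉ A) (haC : a ∉ C)
    (h2AB : (A ∩ B).card = 2) (h2BC : (B ∩ C).card = 2) (h1AC : (A ∩ C).card ≤ 1) :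
    False := by
  have hab : a ≠ b := fun h => hbA (h ▸ hAa)
  -- third element of B
  obtain ⟨q, hqB, hqa, hqb⟩ : ∃ q ∈ B, q ≠ a ∧ q ≠ b := by
    by_contra hcon
    push_neg at hcon
    have hsub : B ⊆ {a, b} := by
      intro w hw
      rcases Classical.em (w = a) with rfl | hwa
      · simp
      · simp [hcon w hw hwa]
    have := Finset.card_le_card hsub
    have h2 : ({a, b} : Finset V).card = 2 := Finset.card_pair hab
    omega
  have hBeq : B = {q, a, b} := by
    refine (Finset.eq_of_subset_of_card_le ?_ ?_).symm
    · intro w hw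
      simp only [Finset.mem_insert, Finset.mem_singleton] at hw
      rcases hw with rfl | rfl | rfl <;> assumption
    · rw [hB]
      exact le_of_eq (Finset.card_eq_three.2 ⟨q, a, b, hqa, hqb, hab, rfl⟩).symm
  have hqA : q ∈ A := by
    by_contra hqA
    have hsub : A ∩ B ⊆ {a} := by
      intro w hw
      rw [Finset.mem_inter, hBeq] at hw
      obtain ⟨hwA, hwB⟩ := hw
      simp only [Finset.mem_insert, Finset.mem_singleton] at hwB ⊢
      rcases hwB with rfl | rfl | rfl
      · exact absurd hwA hqA
      · rfl
      · exact absurd hwA hbA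
    have := Finset.card_le_card hsub
    simp [Finset.card_singleton] at this
    omega
  have hqC : q ∈ C := by
    by_contra hqC
    have hsub : B ∩ C ⊆ {b} := by
      intro w hw
      rw [Finset.mem_inter, hBeq] at hw
      obtain ⟨hwB, hwC⟩ := hw
      simp only [Finset.mem_insert, Finset.mem_singleton] at hwB ⊢
      rcases hwB with rfl | rfl | rfl
      · exact absurd hwC hqC
      · exact absurd hwC haC
      · rfl
    have := Finset.card_le_card hsub
    simp [Finset.card_singleton] at this
    omega
  have hvq : v ≠ q := fun h => hvB (h ▸ hqB)
  have hsub : ({v, q} : Finset V) ⊆ A ∩ C := by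
    intro w hw
    simp only [Finset.mem_insert, Finset.mem_singleton] at hw
    rcases hw with rfl | rfl
    · exact Finset.mem_inter.2 ⟨hAv, hCv⟩
    · exact Finset.mem_inter.2 ⟨hqA, hqC⟩
  have := Finset.card_le_card hsub
  rw [Finset.card_pair hvq] at this
  omega

lemma clean (G : SimpleGraph V) (d : ℕ) (g : ℕ → Cfg G)
    (hdist : ∀ i j, i ≤ d → j ≤ d →
      (ConfigGraph G 3).dist (g i) (g j) = (j - i) + (i - j))
    {x y z : V} (hxy : x ≠ y) (hxz : x ≠ z) (hyz : y ≠ z)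
    {a b c : ℕ} (ha : a ≤ d) (hb : b ≤ d) (hc : c ≤ d)
    (hax : x ∈ (g a).1) (hay : y ∈ (g a).1)
    (hbx : x ∈ (g b).1) (hbz : z ∈ (g b).1)
    (hcy : y ∈ (g c).1) (hcz : z ∈ (g c).1) :
    ∃ t, t ≤ d ∧ x ∈ (g t).1 ∧ y ∈ (g t).1 ∧ z ∈ (g t).1 := by
  by_contra hno
  push_neg at hno
  have hza : z ∉ (g a).1 := fun h => hno a ha hax hay h
  have hyb : y ∉ (g b).1 := fun h => hno b hb hbx h hbz
  have hxc : x ∉ (g c).1 := fun h => hno c hc h hcy hcz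
  have hSind : IndepFinset G {x, y, z} := by
    intro u hu v hv huv
    simp only [Finset.mem_insert, Finset.mem_singleton] at hu hv
    rcases hu with rfl | rfl | rfl <;> rcases hv with rfl | rfl | rfl
    · exact absurd rfl huv
    · exact (g a).2.2 _ hax _ hay huv
    · exact (g b).2.2 _ hbx _ hbz huv
    · exact (g a).2.2 _ hay _ hax huv
    · exact absurd rfl huv
    · exact (g c).2.2 _ hcy _ hcz huv
    · exact (g b).2.2 _ hbz _ hbx huv
    · exact (g c).2.2 _ hcz _ hcy huv
    · exact absurd rfl huv
  have hScard : ({x, y, z} : Finset V).card = 3 :=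
    Finset.card_eq_three.2 ⟨x, y, z, hxy, hxz, hyz, rfl⟩
  set σ : Cfg G := ⟨{x, y, z}, hScard, hSind⟩ with hσdef
  have adjσ : ∀ t, t ≤ d → ∀ u w m : V, u ∈ ({x, y, z} : Finset V) →
      w ∈ ({x, y, z} : Finset V) → m ∈ ({x, y, z} : Finset V) → u ≠ w →
      u ∈ (g t).1 → w ∈ (g t).1 → m ∉ (g t).1 → (ConfigGraph G 3).Adj σ (g t) := by
    intro t ht u w m hu hw hm huw hu' hw' hm'
    have hne : σ ≠ g t := by
      intro h
      apply hm'
      have : σ.1 = (g t).1 := congrArg Subtype.val h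
      rw [← this]
      exact hm
    have h2 : 2 ≤ (σ.1 ∩ (g t).1).card := by
      have hsub : ({u, w} : Finset V) ⊆ σ.1 ∩ (g t).1 := by
        intro s hs
        simp only [Finset.mem_insert, Finset.mem_singleton] at hs
        rcases hs with rfl | rfl
        · exact Finset.mem_inter.2 ⟨hu, hu'⟩
        · exact Finset.mem_inter.2 ⟨hw, hw'⟩
      have := Finset.card_le_card hsub
      rw [Finset.card_pair huw] at this
      exact this
    have h3 : (σ.1 ∩ (g t).1).card ≤ 3 :=
      le_trans (Finset.card_le_card Finset.inter_subset_left) (le_of_eq hScard)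
    have hcard : (σ.1 ∩ (g t).1).card = 2 := by
      by_contra hcc
      exact hne (cfg_eq (by omega))
    exact ⟨hne, by omega⟩
  have adja : (ConfigGraph G 3).Adj σ (g a) :=
    adjσ a ha x y z (by simp) (by simp) (by simp) hxy hax hay hza
  have adjb : (ConfigGraph G 3).Adj σ (g b) :=
    adjσ b hb x z y (by simp) (by simp) (by simp) hxz hbx hbz hyb
  have adjc : (ConfigGraph G 3).Adj σ (g c) :=
    adjσ c hc y z x (by simp) (by simp) (by simp) hyz hcy hcz hxc
  have pair2 : ∀ s t : ℕ, s ≤ d → t ≤ d → (ConfigGraph G 3).Adj σ (g s) →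
      (ConfigGraph G 3).Adj σ (g t) → (t - s) + (s - t) ≤ 2 := by
    intro s t hs ht h1 h2
    have htr := dist_triangle'' (ConfigGraph G 3) h1.symm.reachable h2.reachable
    have e1 : (ConfigGraph G 3).dist (g s) σ = 1 :=
      SimpleGraph.dist_eq_one_iff_adj.2 h1.symm
    have e2 : (ConfigGraph G 3).dist σ (g t) = 1 :=
      SimpleGraph.dist_eq_one_iff_adj.2 h2
    rw [hdist s t hs ht] at htr
    omega
  have hab2 := pair2 a b ha hb adja adjb
  have hac2 := pair2 a c ha hc adja adjc
  have hbc2 := pair2 b c hb hc adjb adjc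
  have hab : a ≠ b := fun h => hno a ha hax hay (h ▸ hbz)
  have hac : a ≠ c := fun h => hno a ha hax hay (h ▸ hcz)
  have hbc : b ≠ c := fun h => hno b hb hbx (h ▸ hcy) hbz
  -- card facts helpers
  have c2 : ∀ s t, s ≤ d → t ≤ d → (t - s) + (s - t) = 1 →
      ((g s).1 ∩ (g t).1).card = 2 := by
    intro s t hs ht h
    have : (ConfigGraph G 3).Adj (g s) (g t) :=
      SimpleGraph.dist_eq_one_iff_adj.1 (by rw [hdist s t hs ht]; omega)
    have := this.2
    omega
  have c1 : ∀ s t, s ≤ d → t ≤ d → (t - s) + (s - t) = 2 →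
      ((g s).1 ∩ (g t).1).card ≤ 1 := by
    intro s t hs ht h
    by_contra hcc
    have := dist_le_one (I := g s) (J := g t) (by omega)
    rw [hdist s t hs ht] at this
    omega
  have hmid : ((b - a) + (a - b) = 1 ∧ (c - b) + (b - c) = 1 ∧ (c - a) + (a - c) = 2)
      ∨ ((b - a) + (a - b) = 1 ∧ (c - a) + (a - c) = 1 ∧ (c - b) + (b - c) = 2)
      ∨ ((c - a) + (a - c) = 1 ∧ (c - b) + (b - c) = 1 ∧ (b - a) + (a - b) = 2) := by
    omega
  rcases hmid with ⟨h1, h2, h3⟩ | ⟨h1, h2, h3⟩ | ⟨h1, h2, h3⟩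
  · -- middle b : A = g a, B = g b, C = g c, v=y, a'=x, b'=z
    exact no_stray_core (g b).2.1 hay hax hbx hbz hcy hcz hyb hza hxc
      (c2 a b ha hb h1) (c2 b c hb hc (by omega)) (c1 a c ha hc h3)
  · -- middle a : A = g b, B = g a, C = g c, v=z, a'=x, b'=y
    exact no_stray_core (g a).2.1 hbz hbx hax hay hcz hcy hza hyb hxc
      (c2 b a hb ha (by omega)) (c2 a c ha hc h2) (c1 b c hb hc h3)
  · -- middle c : A = g a, B = g c, C = g b, v=x, a'=y, b'=z
    exact no_stray_core (g c).2.1 hax hay hcy hcz hbx hbz hxc hza hyb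
      (c2 a c ha hc h1) (c2 c b hc hb (by omega)) (c1 a b ha hb h3)

end CTP

namespace CTP
set_option linter.unusedSectionVars false
set_option maxHeartbeats 1000000

variable {V : Type*} [Fintype V] [DecidableEq V]

lemma maxCompDiam_attain {α : Type*} [Fintype α] [Nonempty α] (H : SimpleGraph α) :
    ∃ u, compDiam H u = maxCompDiam H := by
  obtain ⟨u, -, hu⟩ := Finset.exists_mem_eq_sup (Finset.univ : Finset α) Finset.univ_nonempty
    (fun u => compDiam H u)
  exact ⟨u, by simp only [maxCompDiam]; rw [hu]⟩

lemma compDiam_attain {α : Type*} [Fintype α] (H : SimpleGraph α) (u : α)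
    (h : compDiam H u ≠ 0) :
    ∃ P Q, H.Reachable u P ∧ H.Reachable u Q ∧ H.dist P Q = compDiam H u := by
  have : Nonempty α := ⟨u⟩
  obtain ⟨p, -, hp⟩ := Finset.exists_mem_eq_sup (Finset.univ : Finset (α × α))
    Finset.univ_nonempty
    (fun p => if H.Reachable u p.1 ∧ H.Reachable u p.2 then H.dist p.1 p.2 else 0)
  simp only [compDiam] at h ⊢
  rw [hp] at h ⊢
  split_ifs at h ⊢ with hc
  · exact ⟨p.1, p.2, hc.1, hc.2, rfl⟩
  · exact absurd rfl h

def Gp (G : SimpleGraph V) (d : ℕ) (g : ℕ → Cfg G) : SimpleGraph V where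
  Adj u v := u ≠ v ∧ ∀ t, t ≤ d → ¬ (u ∈ (g t).1 ∧ v ∈ (g t).1)
  symm := ⟨fun u v h => ⟨h.1.symm, fun t ht hm => h.2 t ht ⟨hm.2, hm.1⟩⟩⟩
  loopless := ⟨fun u h => h.1 rfl⟩

def phiHom (G : SimpleGraph V) (d : ℕ) (g : ℕ → Cfg G) (hle : G ≤ Gp G d g) :
    ConfigGraph (Gp G d g) 3 →g ConfigGraph G 3 where
  toFun S := ⟨S.1, S.2.1, fun u hu v hv huv hadj => S.2.2 u hu v hv huv (hle hadj)⟩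
  map_rel' := by
    rintro S T ⟨hne, hcard⟩
    refine ⟨?_, hcard⟩
    intro h
    apply hne
    apply Subtype.ext
    have h' := congrArg Subtype.val h
    exact h'

lemma phiHom_val (G : SimpleGraph V) (d : ℕ) (g : ℕ → Cfg G) (hle : G ≤ Gp G d g)
    (S : Cfg (Gp G d g)) : (phiHom G d g hle S).1 = S.1 := rfl

theorem build (G : SimpleGraph V) (d : ℕ) (g : ℕ → Cfg G)
    (hdist : ∀ i j, i ≤ d → j ≤ d →
      (ConfigGraph G 3).dist (g i) (g j) = (j - i) + (i - j)) :
    ∃ G' : SimpleGraph V, G ≤ G' ∧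
      (∃ m : ℕ, Nonempty (ConfigGraph G' 3 ≃g SimpleGraph.pathGraph m)) ∧
      maxCompDiam (ConfigGraph G' 3) = d := by
  classical
  set R := ConfigGraph G 3 with hR
  have ginj : ∀ i j, i ≤ d → j ≤ d → g i = g j → i = j := by
    intro i j hi hj h
    have := hdist i j hi hj
    rw [h, SimpleGraph.dist_self] at this
    omega
  set G' := Gp G d g with hG'
  have hle : G ≤ G' := by
    intro u v h
    exact ⟨h.ne, fun t ht hm => (g t).2.2 u hm.1 v hm.2 h.ne h⟩
  -- characterization of independent 3-sets of G'
  have hchar : ∀ s : Finset V, (s.card = 3 ∧ IndepFinset G' s) ↔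
      ∃ t, t ≤ d ∧ s = (g t).1 := by
    intro s
    constructor
    · rintro ⟨hcard, hind⟩
      obtain ⟨x, y, z, hxy, hxz, hyz, rfl⟩ := Finset.card_eq_three.1 hcard
      have pair : ∀ u v : V, u ∈ ({x, y, z} : Finset V) → v ∈ ({x, y, z} : Finset V) →
          u ≠ v → ∃ t, t ≤ d ∧ u ∈ (g t).1 ∧ v ∈ (g t).1 := by
        intro u v hu hv huv
        have hnadj := hind u hu v hv huv
        by_contra hcon
        exact hnadj ⟨huv, fun t ht hm => hcon ⟨t, ht, hm.1, hm.2⟩⟩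
      obtain ⟨a, ha, hax, hay⟩ := pair x y (by simp) (by simp) hxy
      obtain ⟨b, hb, hbx, hbz⟩ := pair x z (by simp) (by simp) hxz
      obtain ⟨c, hc, hcy, hcz⟩ := pair y z (by simp) (by simp) hyz
      obtain ⟨t, ht, h1, h2, h3⟩ :=
        clean G d g hdist hxy hxz hyz ha hb hc hax hay hbx hbz hcy hcz
      refine ⟨t, ht, Finset.eq_of_subset_of_card_le ?_ ?_⟩
      · intro w hw
        simp only [Finset.mem_insert, Finset.mem_singleton] at hw
        rcases hw with rfl | rfl | rfl <;> assumption
      · rw [(g t).2.1, hcard]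
    · rintro ⟨t, ht, rfl⟩
      exact ⟨(g t).2.1, fun u hu v hv huv hadj => hadj.2 t ht ⟨hu, hv⟩⟩
  -- the vertices of the new configuration graph
  set R' := ConfigGraph G' 3 with hR'
  set F : ℕ → Cfg G' := fun t => ⟨(g (min t d)).1, (hchar _).2 ⟨min t d, min_le_right _ _, rfl⟩⟩
    with hF
  have Fval : ∀ t, t ≤ d → (F t).1 = (g t).1 := by
    intro t ht
    simp [hF, min_eq_left ht]
  have Fne : ∀ i j, i ≤ d → j ≤ d → i ≠ j → F i ≠ F j := by
    intro i j hi hj hij h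
    have : (g i).1 = (g j).1 := by
      rw [← Fval i hi, ← Fval j hj, h]
    exact hij (ginj i j hi hj (Subtype.ext this))
  -- adjacency in R'
  have hadj' : ∀ i j, i ≤ d → j ≤ d →
      (R'.Adj (F i) (F j) ↔ (j - i) + (i - j) = 1) := by
    intro i j hi hj
    constructor
    · rintro ⟨hne, hcard⟩
      have hgne : g i ≠ g j := by
        intro h
        exact hne (Subtype.ext (by rw [Fval i hi, Fval j hj, h]))
      have hcard' : ((g i).1 ∩ (g j).1).card = 2 := by
        rw [← Fval i hi, ← Fval j hj]
        omega
      have : R.Adj (g i) (g j) := ⟨hgne, by omega⟩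
      have := SimpleGraph.dist_eq_one_iff_adj.2 this
      rw [hdist i j hi hj] at this
      exact this
    · intro h
      have hRadj : R.Adj (g i) (g j) :=
        SimpleGraph.dist_eq_one_iff_adj.1 (by rw [hdist i j hi hj]; omega)
      refine ⟨Fne i j hi hj (by omega), ?_⟩
      have := hRadj.2
      rw [Fval i hi, Fval j hj]
      omega
  -- surjectivity
  have Fsurj : ∀ S : Cfg G', ∃ t, t ≤ d ∧ S = F t := by
    intro S
    obtain ⟨t, ht, hS⟩ := (hchar S.1).1 S.2
    exact ⟨t, ht, Subtype.ext (by rw [Fval t ht]; exact hS)⟩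
  -- reachability and upper distance bounds
  have key : ∀ k i, i + k ≤ d → R'.Reachable (F i) (F (i + k)) ∧
      R'.dist (F i) (F (i + k)) ≤ k := by
    intro k
    induction k with
    | zero =>
      intro i _
      simp only [Nat.add_zero]
      exact ⟨SimpleGraph.Reachable.refl _, le_of_eq SimpleGraph.dist_self⟩
    | succ k ih =>
      intro i hi
      have hadj : R'.Adj (F i) (F (i + 1)) :=
        (hadj' i (i + 1) (by omega) (by omega)).2 (by omega)
      have ih' := ih (i + 1) (by omega)
      have heq : i + (k + 1) = (i + 1) + k := by omega
      rw [heq]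
      refine ⟨hadj.reachable.trans ih'.1, ?_⟩
      have htr := dist_triangle'' R' hadj.reachable ih'.1
      have h1 : R'.dist (F i) (F (i + 1)) = 1 := SimpleGraph.dist_eq_one_iff_adj.2 hadj
      omega
  -- lower bound via homomorphism to R
  have hom : ∀ i j, i ≤ d → j ≤ d → R.dist (g i) (g j) ≤ R'.dist (F i) (F j) := by
    intro i j hi hj
    let φh : R' →g R := phiHom G d g hle
    have hreach : R'.Reachable (F i) (F j) := by
      rcases le_total i j with h | h
      · have := (key (j - i) i (by omega)).1
        rw [show i + (j - i) = j by omega] at this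
        exact this
      · have := (key (i - j) j (by omega)).1
        rw [show j + (i - j) = i by omega] at this
        exact this.symm
    obtain ⟨p, hp⟩ := hreach.exists_walk_length_eq_dist
    have e1 : φh (F i) = g i := Subtype.ext ((phiHom_val G d g hle (F i)).trans (Fval i hi))
    have e2 : φh (F j) = g j := Subtype.ext ((phiHom_val G d g hle (F j)).trans (Fval j hj))
    calc R.dist (g i) (g j) ≤ ((p.map φh).copy e1 e2).length := SimpleGraph.dist_le _
      _ = p.length := by rw [SimpleGraph.Walk.length_copy, SimpleGraph.Walk.length_map]
      _ = R'.dist (F i) (F j) := hp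
  have distF : ∀ i j, i ≤ d → j ≤ d → R'.dist (F i) (F j) = (j - i) + (i - j) := by
    intro i j hi hj
    have hlow := hom i j hi hj
    rw [hdist i j hi hj] at hlow
    have hup : R'.dist (F i) (F j) ≤ (j - i) + (i - j) := by
      rcases le_total i j with h | h
      · have := (key (j - i) i (by omega)).2
        rw [show i + (j - i) = j by omega] at this
        omega
      · have := (key (i - j) j (by omega)).2
        rw [show j + (i - j) = i by omega] at this
        rw [SimpleGraph.dist_comm]
        omega
    omega
  -- the isomorphism with the path graph
  have hiso : Nonempty (R' ≃g SimpleGraph.pathGraph (d + 1)) := by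
    have hbij : Function.Bijective (fun i : Fin (d + 1) => F i.1) := by
      constructor
      · intro i j h
        by_contra hij
        exact Fne i.1 j.1 (by omega) (by omega) (fun h' => hij (Fin.ext h')) h
      · intro S
        obtain ⟨t, ht, hS⟩ := Fsurj S
        exact ⟨⟨t, by omega⟩, hS.symm⟩
    refine ⟨(SimpleGraph.Iso.symm ⟨Equiv.ofBijective _ hbij, ?_⟩)⟩
    intro i j
    obtain ⟨i, hi⟩ := i
    obtain ⟨j, hj⟩ := j
    rw [SimpleGraph.pathGraph_adj]
    simp only [Equiv.ofBijective_apply]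
    rw [hadj' i j (by omega) (by omega)]
    constructor <;> intro h <;> simp_all <;> omega
  refine ⟨G', hle, ⟨d + 1, hiso⟩, ?_⟩
  -- maxCompDiam computation
  apply le_antisymm
  · simp only [maxCompDiam, compDiam]
    apply Finset.sup_le
    intro u _
    apply Finset.sup_le
    intro p _
    split_ifs with h
    · obtain ⟨i, hi, h1⟩ := Fsurj p.1
      obtain ⟨j, hj, h2⟩ := Fsurj p.2
      rw [h1, h2, distF i j hi hj]
      omega
    · omega
  · have hreach0d : R'.Reachable (F 0) (F d) := by
      have := (key d 0 (by omega)).1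
      rwa [Nat.zero_add] at this
    simp only [maxCompDiam, compDiam]
    refine le_trans ?_ (Finset.le_sup (Finset.mem_univ (F 0)))
    refine le_trans ?_ (Finset.le_sup (Finset.mem_univ (F 0, F d)))
    rw [if_pos ⟨SimpleGraph.Reachable.refl _, hreach0d⟩, distF 0 d (by omega) (by omega)]
    omega

end CTP


/-- For every finite graph `G` there is a supergraph `G'` on the same vertex set such that
`R_3(G')` is a path and the maximum diameter of a connected component of `R_3(G)` equals
that of `R_3(G')`. -/
theorem complete_to_path {V : Type*} [Fintype V] [DecidableEq V] (G : SimpleGraph V) :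
    ∃ G' : SimpleGraph V, G ≤ G' ∧
      (∃ m : ℕ, Nonempty (ConfigGraph G' 3 ≃g SimpleGraph.pathGraph m)) ∧
      maxCompDiam (ConfigGraph G 3) = maxCompDiam (ConfigGraph G' 3) := by
  classical
  by_cases hne : Nonempty {s : Finset V // s.card = 3 ∧ IndepFinset G s}
  · set R := ConfigGraph G 3 with hR
    set d := maxCompDiam R with hd
    obtain ⟨P, Q, hreach, hdPQ⟩ : ∃ P Q, R.Reachable P Q ∧ R.dist P Q = d := by
      haveI := hne
      obtain ⟨u, hu⟩ := CTP.maxCompDiam_attain R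
      rw [← hd] at hu
      by_cases h0 : d = 0
      · exact ⟨u, u, SimpleGraph.Reachable.refl u, by rw [SimpleGraph.dist_self]; omega⟩
      · obtain ⟨P, Q, h1, h2, h3⟩ := CTP.compDiam_attain R u (by omega)
        exact ⟨P, Q, h1.symm.trans h2, by rw [h3, hu]⟩
    obtain ⟨W, hW⟩ := hreach.exists_walk_length_eq_dist
    have hlen : W.length = d := by rw [hW, hdPQ]
    set g : ℕ → _ := W.getVert with hg
    have hadjg : ∀ i, i < d → R.Adj (g i) (g (i + 1)) := by
      intro i hi
      exact W.adj_getVert_succ (by omega)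
    have key : ∀ k i, i + k ≤ d →
        R.Reachable (g i) (g (i + k)) ∧ R.dist (g i) (g (i + k)) ≤ k := by
      intro k
      induction k with
      | zero =>
        intro i _
        simp only [Nat.add_zero]
        exact ⟨SimpleGraph.Reachable.refl _, le_of_eq SimpleGraph.dist_self⟩
      | succ k ih =>
        intro i hi
        have hadj := hadjg i (by omega)
        have ih' := ih (i + 1) (by omega)
        have heq : i + (k + 1) = (i + 1) + k := by omega
        rw [heq]
        refine ⟨hadj.reachable.trans ih'.1, ?_⟩
        have htr := CTP.dist_triangle'' R hadj.reachable ih'.1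
        have h1 : R.dist (g i) (g (i + 1)) = 1 := SimpleGraph.dist_eq_one_iff_adj.2 hadj
        omega
    have hg0 : g 0 = P := W.getVert_zero
    have hgd : g d = Q := by rw [← hlen]; exact W.getVert_length
    have hdist : ∀ i j, i ≤ d → j ≤ d → R.dist (g i) (g j) = (j - i) + (i - j) := by
      have main : ∀ i j, i ≤ j → j ≤ d → R.dist (g i) (g j) = j - i := by
        intro i j hij hj
        have t0 := key (j - i) i (by omega)
        rw [show i + (j - i) = j by omega] at t0
        have t1 := key i 0 (by omega)
        rw [Nat.zero_add] at t1
        have t2 := key (d - j) j (by omega)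
        rw [show j + (d - j) = d by omega] at t2
        have base : R.dist (g 0) (g d) = d := by rw [hg0, hgd]; exact hdPQ
        have tri1 : R.dist (g 0) (g d) ≤ R.dist (g 0) (g i) + R.dist (g i) (g d) :=
          CTP.dist_triangle'' R t1.1 (t0.1.trans t2.1)
        have tri2 : R.dist (g i) (g d) ≤ R.dist (g i) (g j) + R.dist (g j) (g d) :=
          CTP.dist_triangle'' R t0.1 t2.1
        have u0 := t0.2
        have u1 := t1.2
        have u2 := t2.2
        omega
      intro i j hi hj
      rcases le_total i j with h | h
      · rw [main i j h hj]; omega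
      · rw [SimpleGraph.dist_comm, main j i h hi]; omega
    obtain ⟨G', hle, hiso, hmax⟩ := CTP.build G d g hdist
    exact ⟨G', hle, hiso, hmax.symm⟩
  · have hE : IsEmpty {s : Finset V // s.card = 3 ∧ IndepFinset G s} := not_nonempty_iff.1 hne
    have hE' : IsEmpty {s : Finset V // s.card = 3 ∧ IndepFinset (⊤ : SimpleGraph V) s} := by
      constructor
      rintro ⟨s, hcard, hind⟩
      obtain ⟨u, hu, v, hv, huv⟩ := Finset.one_lt_card.1 (by omega : 1 < s.card)
      exact hind u hu v hv huv (by simpa using huv)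
    refine ⟨⊤, le_top, ⟨0, ⟨⟨Equiv.equivOfIsEmpty _ _, ?_⟩⟩⟩, ?_⟩
    · intro a b
      exact isEmptyElim a
    · simp [maxCompDiam, Finset.univ_eq_empty]
end
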